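/- arXiv:1701.01387 — 9 statements merged into one kernel-verified Lean document; each statement's English description precedes it below -/
import Mathlib

section
/- Let A ⊆ ℤ. The following are equivalent: (i) A is sufficiently sparse, i.e. δ̲(Σ_n(±A) ∩ ℕ) = 0 for every n ≥ 1; (ii) for every n ≥ 1, Σ_n(±A) does not contain mℤ for any integer m ≥ 1; (iii) for every n ≥ 1, Σ_n(±A) does not contain any coset mℤ + r with m ≥ 1. -/
open Filter Pointwise

/-- The `k`-fold sumset `X + ⋯ + X` (`k` times) of a set of integers. -/
def kFold (X : Set ℤ) (k : ℕ) : Set ℤ :=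
  {z : ℤ | ∃ f : Fin k → ℤ, (∀ i, f i ∈ X) ∧ z = ∑ i, f i}

/-- `Σ_n(X) = ⋃_{k=1}^n k(X)`. -/
def sigmaSum (n : ℕ) (X : Set ℤ) : Set ℤ :=
  ⋃ k ∈ Finset.Icc 1 n, kFold X k

/-- `±A = {x ∈ ℤ : |x| ∈ A}`. -/
def pmSet (A : Set ℤ) : Set ℤ := {x : ℤ | |x| ∈ A}

/-- The lower asymptotic density of a set of naturals:
`liminf_{n → ∞} |A ∩ {1,…,n}| / n`. -/
noncomputable def lowerDensity (A : Set ℕ) : ℝ :=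
  Filter.liminf (fun n : ℕ => (Set.ncard (A ∩ Set.Icc 1 n) : ℝ) / n) Filter.atTop

/-- The set of naturals whose image in `ℤ` lies in `S`. -/
def intSetToNat (S : Set ℤ) : Set ℕ := {n : ℕ | (n : ℤ) ∈ S}

/-- `A ⊆ ℤ` is sufficiently sparse if `δ̲(Σ_n(±A) ∩ ℕ) = 0` for all `n ≥ 1`. -/
def SuffSparse (A : Set ℤ) : Prop :=
  ∀ n : ℕ, 1 ≤ n → lowerDensity (intSetToNat (sigmaSum n (pmSet A))) = 0

/-- A set `S` of (positive) reals is geometric if `{s/t : s, t ∈ S, t ≤ s}` is a closed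
and discrete subset of `ℝ`. -/
def IsGeometric (S : Set ℝ) : Prop :=
  IsClosed {x : ℝ | ∃ s ∈ S, ∃ t ∈ S, t ≤ s ∧ x = s / t} ∧
    DiscreteTopology {x : ℝ | ∃ s ∈ S, ∃ t ∈ S, t ≤ s ∧ x = s / t}

/-- `A ⊆ ℤ` is geometrically sparse if there is `f : A → ℝ⁺` with `f(A)` geometric and
`sup_{a ∈ A} |a − f(a)| < ∞`. -/
def GeomSparse (A : Set ℤ) : Prop :=
  ∃ f : ℤ → ℝ, (∀ a ∈ A, 0 < f a) ∧ IsGeometric (f '' A) ∧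
    ∃ C : ℝ, ∀ a ∈ A, |(a : ℝ) - f a| ≤ C

/-! If `S = Σ_n(±A) ∩ ℕ` has lower density `δ > 0`, a set of integers whose translates of `S`
are pairwise disjoint has at most `1/δ` elements (count the translates in a long interval), so
a maximal such set `F` satisfies `ℤ = (S - S) + F`, where `S - S ⊆ Σ_{2n}(±A)`. Writing an
element of the group `mℤ` generated by `±A` as `d + f` with `d ∈ S - S`, the shift `f` also
lies in `mℤ`, and the finitely many such shifts lie in a common `Σ_K(±A)`; hence
`mℤ ⊆ Σ_{2n+K}(±A)`. Conversely, `mℤ` has positive lower density, and a coset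
`mℤ + r ⊆ Σ_n(±A)` gives `mℤ ⊆ Σ_{2n}(±A)` after subtracting `r`. -/

section

variable {X : Set ℤ} {S : Set ℕ} {c : ℝ}

lemma add_mem_kFold {x y : ℤ} {k l : ℕ} (hx : x ∈ kFold X k) (hy : y ∈ kFold X l) :
    x + y ∈ kFold X (k + l) := by
  obtain ⟨f, hf, rfl⟩ := hx
  obtain ⟨g, hg, rfl⟩ := hy
  refine ⟨Fin.append f g, Fin.addCases (by simpa using hf) (by simpa using hg), ?_⟩
  simp [Fin.sum_univ_add]

lemma mem_sigmaSum {x : ℤ} {n : ℕ} :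
    x ∈ sigmaSum n X ↔ ∃ k, 1 ≤ k ∧ k ≤ n ∧ x ∈ kFold X k := by
  simp [sigmaSum, and_assoc]

lemma mem_sigmaSum_one {x : ℤ} (hx : x ∈ X) : x ∈ sigmaSum 1 X :=
  mem_sigmaSum.2 ⟨1, le_rfl, le_rfl, fun _ => x, fun _ => hx, by simp⟩

lemma sigmaSum_mono {n m : ℕ} (h : n ≤ m) : sigmaSum n X ⊆ sigmaSum m X := by
  intro x hx
  obtain ⟨k, hk1, hkn, hx⟩ := mem_sigmaSum.1 hx
  exact mem_sigmaSum.2 ⟨k, hk1, hkn.trans h, hx⟩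

lemma add_mem_sigmaSum {x y : ℤ} {n m : ℕ} (hx : x ∈ sigmaSum n X) (hy : y ∈ sigmaSum m X) :
    x + y ∈ sigmaSum (n + m) X := by
  obtain ⟨k, hk1, hkn, hx⟩ := mem_sigmaSum.1 hx
  obtain ⟨l, -, hlm, hy⟩ := mem_sigmaSum.1 hy
  exact mem_sigmaSum.2 ⟨k + l, by omega, by omega, add_mem_kFold hx hy⟩

lemma neg_mem_sigmaSum (hX : ∀ x ∈ X, -x ∈ X) {x : ℤ} {n : ℕ} (hx : x ∈ sigmaSum n X) :
    -x ∈ sigmaSum n X := by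
  obtain ⟨k, hk1, hkn, f, hf, rfl⟩ := mem_sigmaSum.1 hx
  exact mem_sigmaSum.2 ⟨k, hk1, hkn, fun i => -f i, fun i => hX _ (hf i), by simp⟩

lemma sub_mem_sigmaSum (hX : ∀ x ∈ X, -x ∈ X) {x y : ℤ} {n m : ℕ} (hx : x ∈ sigmaSum n X)
    (hy : y ∈ sigmaSum m X) : x - y ∈ sigmaSum (n + m) X :=
  sub_eq_add_neg x y ▸ add_mem_sigmaSum hx (neg_mem_sigmaSum hX hy)

lemma neg_mem_pmSet (A : Set ℤ) : ∀ x ∈ pmSet A, -x ∈ pmSet A := by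
  simp [pmSet]

lemma sigmaSum_subset_closure (n : ℕ) : sigmaSum n X ⊆ AddSubgroup.closure X := by
  intro x hx
  obtain ⟨k, -, -, f, hf, rfl⟩ := mem_sigmaSum.1 hx
  exact AddSubgroup.sum_mem _ fun i _ => AddSubgroup.subset_closure (hf i)

lemma exists_mem_sigmaSum_of_mem_closure (hX : ∀ x ∈ X, -x ∈ X) (hne : X.Nonempty) {z : ℤ}
    (hz : z ∈ AddSubgroup.closure X) : ∃ k, z ∈ sigmaSum k X := by
  induction hz using AddSubgroup.closure_induction with
  | mem x hx => exact ⟨1, mem_sigmaSum_one hx⟩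
  | zero =>
    obtain ⟨x, hx⟩ := hne
    exact ⟨2, by simpa using sub_mem_sigmaSum hX (mem_sigmaSum_one hx) (mem_sigmaSum_one hx)⟩
  | add x y _ _ hx hy =>
    obtain ⟨k, hk⟩ := hx
    obtain ⟨l, hl⟩ := hy
    exact ⟨k + l, add_mem_sigmaSum hk hl⟩
  | neg x _ hx =>
    obtain ⟨k, hk⟩ := hx
    exact ⟨k, neg_mem_sigmaSum hX hk⟩

lemma exists_zmultiples_subset_sigmaSum (hX : ∀ x ∈ X, -x ∈ X) {F : Finset ℤ} {M : ℕ}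
    (hF : ∀ z, ∃ f ∈ F, z - f ∈ sigmaSum M X) :
    ∃ m : ℤ, 1 ≤ m ∧ ∃ K : ℕ, {x : ℤ | ∃ y : ℤ, x = m * y} ⊆ sigmaSum K X := by
  set G := AddSubgroup.closure X
  have hG : G ≠ ⊥ := by
    intro hG
    obtain ⟨z, hz⟩ := Infinite.exists_notMem_finset F
    obtain ⟨f, hf, hzf⟩ := hF z
    have hzf0 : z - f ∈ G := sigmaSum_subset_closure M hzf
    rw [hG, AddSubgroup.mem_bot, sub_eq_zero] at hzf0
    exact hz (hzf0 ▸ hf)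
  have hne : X.Nonempty := Set.nonempty_iff_ne_empty.2 fun hX0 => hG (by simp [G, hX0])
  have hshifts : ∀ᶠ K in atTop, ∀ f ∈ F, f ∈ G → f ∈ sigmaSum K X := by
    refine (eventually_all_finset F).2 fun f _ => ?_
    by_cases hfG : f ∈ G
    · obtain ⟨k, hk⟩ := exists_mem_sigmaSum_of_mem_closure hX hne hfG
      filter_upwards [eventually_ge_atTop k] with K hK
      exact fun _ => sigmaSum_mono hK hk
    · exact .of_forall fun _ hfG' => absurd hfG' hfG
  obtain ⟨K, hK⟩ := hshifts.exists
  obtain ⟨g, hg⟩ := Int.subgroup_cyclic G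
  rw [← AddSubgroup.zmultiples_eq_closure] at hg
  have hg0 : g ≠ 0 := fun h => hG (by rw [hg, h, AddSubgroup.zmultiples_zero_eq_bot])
  refine ⟨|g|, abs_pos.2 hg0, M + K, ?_⟩
  rintro x ⟨y, rfl⟩
  have hxG : |g| * y ∈ G := hg ▸ Int.mem_zmultiples_iff.2 ((self_dvd_abs g).mul_right y)
  obtain ⟨f, hf, hxf⟩ := hF (|g| * y)
  have hfG : f ∈ G := by simpa using G.sub_mem hxG (sigmaSum_subset_closure M hxf)
  simpa using add_mem_sigmaSum hxf (hK f hf hfG)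

lemma ncard_inter_Icc_le (S : Set ℕ) (N : ℕ) : (S ∩ Set.Icc 1 N).ncard ≤ N :=
  (Set.ncard_le_ncard Set.inter_subset_right (Set.finite_Icc 1 N)).trans (by simp)

lemma isBoundedUnder_density (S : Set ℕ) :
    IsBoundedUnder (· ≤ ·) atTop fun N : ℕ => ((S ∩ Set.Icc 1 N).ncard : ℝ) / N :=
  isBoundedUnder_of
    ⟨1, fun N => div_le_one_of_le₀ (mod_cast ncard_inter_Icc_le S N) N.cast_nonneg⟩

lemma le_lowerDensity (h : ∀ᶠ N : ℕ in atTop, c * N ≤ (S ∩ Set.Icc 1 N).ncard) :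
    c ≤ lowerDensity S := by
  refine le_liminf_of_le (isBoundedUnder_density S).isCoboundedUnder_ge ?_
  filter_upwards [h, eventually_gt_atTop 0] with N hN hN0
  rwa [le_div_iff₀ (by exact_mod_cast hN0)]

lemma exists_pos_eventually_le_ncard (h : lowerDensity S ≠ 0) :
    ∃ c : ℝ, 0 < c ∧ ∀ᶠ N : ℕ in atTop, c * N ≤ (S ∩ Set.Icc 1 N).ncard := by
  have hpos : 0 < lowerDensity S :=
    (le_lowerDensity (.of_forall fun N => by simp)).lt_of_ne' h
  refine ⟨lowerDensity S / 2, half_pos hpos, ?_⟩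
  have hlt : lowerDensity S / 2 < lowerDensity S := half_lt_self hpos
  filter_upwards [eventually_lt_of_lt_liminf hlt (isBoundedUnder_of ⟨0, fun N => by positivity⟩),
    eventually_gt_atTop 0] with N hN hN0
  exact ((lt_div_iff₀ (by exact_mod_cast hN0)).1 hN).le

lemma lowerDensity_multiples_ne_zero {m : ℕ} (hm : 1 ≤ m) (hS : ∀ y, m * y ∈ S) :
    lowerDensity S ≠ 0 := by
  refine (lt_of_lt_of_le ?_ (le_lowerDensity (c := 1 / (2 * m)) ?_)).ne'
  · positivity
  filter_upwards [eventually_ge_atTop (2 * m)] with N hN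
  have hcount : N / m ≤ (S ∩ Set.Icc 1 N).ncard := by
    rw [← Nat.Ioc_filter_dvd_card_eq_div, ← Set.ncard_coe_finset]
    refine Set.ncard_le_ncard ?_ (Set.toFinite _)
    intro x hx
    simp only [Finset.coe_filter, Finset.mem_Ioc] at hx
    obtain ⟨⟨hx0, hxN⟩, y, rfl⟩ := hx
    exact ⟨hS y, hx0, hxN⟩
  have hN' : N ≤ 2 * m * (N / m) := by
    have := Nat.div_add_mod N m
    have := Nat.mod_lt N (by omega : 0 < m)
    nlinarith
  have hmR : (0 : ℝ) < 2 * m := by positivity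
  rw [div_mul_eq_mul_div, one_mul, div_le_iff₀ hmR]
  calc (N : ℝ) ≤ 2 * m * (N / m : ℕ) := by exact_mod_cast hN'
    _ ≤ _ := by rw [mul_comm]; gcongr

lemma card_mul_le_of_pairwise_sub_notMem
    (h : ∀ᶠ N : ℕ in atTop, c * N ≤ (S ∩ Set.Icc 1 N).ncard) {F : Finset ℤ}
    (hF : (F : Set ℤ).Pairwise fun f f' => f - f' ∉ ((↑) '' S : Set ℤ) - (↑) '' S) :
    c * F.card ≤ 2 := by
  classical
  set R := F.sup Int.natAbs
  obtain ⟨N, hcN, hRN⟩ := (h.and (eventually_ge_atTop (2 * R + 1))).exists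
  set P := (Finset.Icc 1 N).filter (· ∈ S)
  have hP : (S ∩ Set.Icc 1 N).ncard = P.card := by
    rw [← Set.ncard_coe_finset]
    congr 1
    ext
    simp only [P, Finset.coe_filter, Finset.mem_Icc, Set.mem_inter_iff, Set.mem_Icc]
    exact ⟨fun ⟨hS, hI⟩ => ⟨hI, hS⟩, fun ⟨hI, hS⟩ => ⟨hS, hI⟩⟩
  let translate (f : ℤ) : Finset ℤ := P.image fun s : ℕ => (s : ℤ) + f
  have hcard_translate (f : ℤ) : (translate f).card = P.card :=
    Finset.card_image_of_injective _ fun a b hab => by simpa using hab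
  -- two translates meeting at `s + f = s' + f'` would give `f - f' = s' - s`
  have hdisj : (F : Set ℤ).PairwiseDisjoint translate := by
    intro f hf f' hf' hne
    refine Finset.disjoint_left.2 fun x hx hx' => hF hf hf' hne ?_
    obtain ⟨s, hs, rfl⟩ := Finset.mem_image.1 hx
    obtain ⟨s', hs', hss'⟩ := Finset.mem_image.1 hx'
    exact ⟨s', ⟨s', (Finset.mem_filter.1 hs').2, rfl⟩, s, ⟨s, (Finset.mem_filter.1 hs).2, rfl⟩,
      show (s' : ℤ) - s = f - f' by omega⟩
  have hbox : F.biUnion translate ⊆ Finset.Icc (-(R : ℤ)) (R + N) := by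
    intro x hx
    obtain ⟨f, hf, hx⟩ := Finset.mem_biUnion.1 hx
    obtain ⟨s, hs, rfl⟩ := Finset.mem_image.1 hx
    have hfR : f.natAbs ≤ R := Finset.le_sup (f := Int.natAbs) hf
    have hsN := Finset.mem_Icc.1 (Finset.mem_filter.1 hs).1
    rw [Finset.mem_Icc]
    omega
  have hcount : F.card * P.card ≤ 2 * N := by
    have := Finset.card_le_card hbox
    rw [Finset.card_biUnion hdisj, Finset.sum_congr rfl fun f _ => hcard_translate f,
      Finset.sum_const, smul_eq_mul, Int.card_Icc] at this
    omega
  have hN : (0 : ℝ) < N := by exact_mod_cast (by omega : 0 < N)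
  rw [hP] at hcN
  have : c * F.card * N ≤ 2 * N := by
    calc c * F.card * N = F.card * (c * N) := by ring
      _ ≤ F.card * P.card := by gcongr
      _ ≤ 2 * N := by exact_mod_cast hcount
  exact le_of_mul_le_mul_right this hN

lemma exists_finset_forall_sub_mem_sub (hc : 0 < c)
    (h : ∀ᶠ N : ℕ in atTop, c * N ≤ (S ∩ Set.Icc 1 N).ncard) :
    ∃ F : Finset ℤ, ∀ z : ℤ, ∃ f ∈ F, z - f ∈ ((↑) '' S : Set ℤ) - (↑) '' S := by
  classical
  set T : Set ℤ := (↑) '' S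
  have hzero : (0 : ℤ) ∈ T - T := by
    obtain ⟨N, hN, hN1⟩ := (h.and (eventually_ge_atTop 1)).exists
    have : (S ∩ Set.Icc 1 N).ncard ≠ 0 := by
      have : (0 : ℝ) < c * N := mul_pos hc (by exact_mod_cast hN1)
      exact_mod_cast (this.trans_le hN).ne'
    obtain ⟨s, hs, -⟩ := Set.nonempty_of_ncard_ne_zero this
    exact ⟨s, ⟨s, hs, rfl⟩, s, ⟨s, hs, rfl⟩, sub_self _⟩
  let IsSeparated (F : Finset ℤ) : Prop := (F : Set ℤ).Pairwise fun f f' => f - f' ∉ T - T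
  let B := ⌊2 / c⌋₊
  have hbound (F : Finset ℤ) (hF : IsSeparated F) : F.card ≤ B :=
    Nat.le_floor ((le_div_iff₀' hc).2 (card_mul_le_of_pairwise_sub_notMem h hF))
  -- by maximality of a separated `F`, no `z` can be added to it
  let P (r : ℕ) : Prop := ∃ F : Finset ℤ, F.card = r ∧ IsSeparated F
  obtain ⟨F, hFcard, hF⟩ : P (Nat.findGreatest P B) :=
    Nat.findGreatest_spec (Nat.zero_le B) ⟨∅, rfl, by simp [IsSeparated]⟩
  refine ⟨F, fun z => ?_⟩
  by_contra! hz
  have hzF : z ∉ F := fun hzF => hz z hzF (by simpa using hzero)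
  have hsep : IsSeparated (insert z F) := by
    simp only [IsSeparated, Finset.coe_insert, Set.pairwise_insert]
    refine ⟨hF, fun f hf _ => ⟨hz f hf, fun ⟨a, ha, b, hb, hab⟩ => hz f hf ?_⟩⟩
    exact ⟨b, hb, a, ha, show b - a = z - f by linarith [show a - b = f - z from hab]⟩
  have hcard : (insert z F).card = Nat.findGreatest P B + 1 := by
    rw [Finset.card_insert_of_notMem hzF, hFcard]
  exact Nat.findGreatest_is_greatest (Nat.lt_succ_self _) (hcard ▸ hbound _ hsep)
    ⟨insert z F, hcard, hsep⟩

lemma exists_zmultiples_subset_of_lowerDensity_ne_zero (hX : ∀ x ∈ X, -x ∈ X) {n : ℕ}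
    (h : lowerDensity (intSetToNat (sigmaSum n X)) ≠ 0) :
    ∃ m : ℤ, 1 ≤ m ∧ ∃ K : ℕ, {x : ℤ | ∃ y : ℤ, x = m * y} ⊆ sigmaSum K X := by
  obtain ⟨c, hc, hcount⟩ := exists_pos_eventually_le_ncard h
  obtain ⟨F, hF⟩ := exists_finset_forall_sub_mem_sub hc hcount
  refine exists_zmultiples_subset_sigmaSum hX (F := F) (M := n + n) fun z => ?_
  obtain ⟨f, hf, _, ⟨a, ha, rfl⟩, _, ⟨b, hb, rfl⟩, hab⟩ := hF z
  exact ⟨f, hf, hab ▸ sub_mem_sigmaSum hX ha hb⟩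

end

/-- For `A ⊆ ℤ`, the following are equivalent: (i) `A` is sufficiently sparse;
(ii) for every `n ≥ 1`, `Σ_n(±A)` does not contain `mℤ` for any `m ≥ 1`;
(iii) for every `n ≥ 1`, `Σ_n(±A)` does not contain any coset `mℤ + r` with `m ≥ 1`. -/
theorem sufficiently_sparse_tfae (A : Set ℤ) :
    (SuffSparse A ↔
      ∀ n : ℕ, 1 ≤ n → ∀ m : ℤ, 1 ≤ m →
        ¬ ({x : ℤ | ∃ y : ℤ, x = m * y} ⊆ sigmaSum n (pmSet A))) ∧
    ((∀ n : ℕ, 1 ≤ n → ∀ m : ℤ, 1 ≤ m →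
        ¬ ({x : ℤ | ∃ y : ℤ, x = m * y} ⊆ sigmaSum n (pmSet A))) ↔
      ∀ n : ℕ, 1 ≤ n → ∀ m : ℤ, 1 ≤ m → ∀ r : ℤ,
        ¬ ({x : ℤ | ∃ y : ℤ, x = m * y + r} ⊆ sigmaSum n (pmSet A))) := by
  have hA := neg_mem_pmSet A
  refine ⟨⟨fun hsparse n hn m hm hsub => ?_, fun hlattice n hn => ?_⟩,
    ⟨fun hlattice n hn m hm r hsub => ?_, fun hcoset n hn m hm hsub => ?_⟩⟩
  · refine lowerDensity_multiples_ne_zero (m := m.toNat) (by omega) (fun y => hsub ?_)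
      (hsparse n hn)
    exact ⟨y, by push_cast; rw [Int.toNat_of_nonneg (by omega)]⟩
  · by_contra hdense
    obtain ⟨m, hm, K, hK⟩ := exists_zmultiples_subset_of_lowerDensity_ne_zero hA hdense
    exact hlattice (K + 1) K.succ_pos m hm (hK.trans (sigmaSum_mono K.le_succ))
  · refine hlattice (n + n) (by omega) m hm ?_
    rintro _ ⟨y, rfl⟩
    simpa using sub_mem_sigmaSum hA (hsub ⟨y, rfl⟩) (hsub ⟨0, rfl⟩)
  · exact hcoset n hn m hm 0 (by simpa using hsub)
end

section
/- Let A ⊆ ℤ⁺ be infinite with strictly increasing enumeration (a_n)_{n=0}^∞. If lim_{n→∞} a_{n+1}/a_n = ∞, then A is a geometric set, i.e. the set {a_n/a_m : m ≤ n} of ratios is a closed and discrete subset of ℝ (and hence A is geometrically sparse, witnessed by the identity map). -/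
open Filter Pointwise

lemma aux_isolated (S : Set ℝ) (hfin : ∀ M : ℝ, (S ∩ Set.Iic M).Finite) (x : ℝ) :
    ∃ ε > 0, S ∩ Metric.ball x ε ⊆ {x} := by
  set F : Set ℝ := (S ∩ Set.Iic (x + 1)) \ {x} with hFdef
  have hF : F.Finite := ((hfin (x + 1)).diff)
  have hclosed : IsClosed F := hF.isClosed
  have hx : x ∈ Fᶜ := by simp [hFdef]
  obtain ⟨ε, hε, hball⟩ := Metric.isOpen_iff.mp hclosed.isOpen_compl x hx
  refine ⟨min ε 1, by positivity, ?_⟩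
  rintro y ⟨hyS, hy⟩
  have h1 : y ∈ Metric.ball x ε := Metric.ball_subset_ball (min_le_left _ _) hy
  have h2 : |y - x| < 1 := by
    have := Metric.mem_ball.mp hy
    rw [Real.dist_eq] at this
    exact lt_of_lt_of_le this (min_le_right _ _)
  have h3 : y ≤ x + 1 := by have := (abs_lt.mp h2).2; linarith
  have h4 : y ∉ F := hball h1
  simp only [hFdef, Set.mem_diff, Set.mem_inter_iff, Set.mem_Iic, Set.mem_singleton_iff,
    not_and, not_not] at h4
  exact h4 ⟨hyS, h3⟩

lemma aux_closed_discrete (S : Set ℝ) (hfin : ∀ M : ℝ, (S ∩ Set.Iic M).Finite) :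
    IsClosed S ∧ DiscreteTopology S := by
  constructor
  · rw [← isOpen_compl_iff, Metric.isOpen_iff]
    intro x hx
    obtain ⟨ε, hε, hsub⟩ := aux_isolated S hfin x
    refine ⟨ε, hε, fun y hy hyS => hx ?_⟩
    have := hsub ⟨hyS, hy⟩
    simp only [Set.mem_singleton_iff] at this
    rwa [← this]
  · rw [discreteTopology_iff_isOpen_singleton]
    rintro ⟨x, hxS⟩
    obtain ⟨ε, hε, hsub⟩ := aux_isolated S hfin x
    have : ({⟨x, hxS⟩} : Set S) = Subtype.val ⁻¹' Metric.ball x ε := by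
      ext ⟨y, hyS⟩
      simp only [Set.mem_singleton_iff, Set.mem_preimage, Subtype.mk.injEq]
      constructor
      · rintro rfl; exact Metric.mem_ball_self hε
      · intro hy; exact hsub ⟨hyS, hy⟩
    rw [this]
    exact (Metric.isOpen_ball).preimage continuous_subtype_val

/-- If `A ⊆ ℤ⁺` is infinite with strictly increasing enumeration `(a_n)` and
`lim a_{n+1}/a_n = ∞`, then `A` is geometric (its ratio set is closed and discrete), and
hence geometrically sparse. -/
theorem geometric_of_ratio_tendsto_atTop (A : Set ℤ) (hApos : ∀ x ∈ A, 0 < x)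
    (a : ℕ → ℤ) (ha : StrictMono a) (hrange : Set.range a = A)
    (hlim : Tendsto (fun n : ℕ => (a (n + 1) : ℝ) / (a n : ℝ)) atTop atTop) :
    IsGeometric ((fun x : ℤ => (x : ℝ)) '' A) ∧ GeomSparse A := by
  have hgeo : IsGeometric ((fun x : ℤ => (x : ℝ)) '' A) := by
    have haA : ∀ n, a n ∈ A := fun n => hrange ▸ Set.mem_range_self n
    have hapos : ∀ n, (0 : ℤ) < a n := fun n => hApos _ (haA n)
    have haposR : ∀ n, (0 : ℝ) < (a n : ℝ) := fun n => by exact_mod_cast hapos n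
    have ha1R : ∀ n, (1 : ℝ) ≤ (a n : ℝ) := fun n => by exact_mod_cast hapos n
    have hage : ∀ n : ℕ, a 0 + n ≤ a n := by
      intro n
      induction n with
      | zero => simp
      | succ k ih =>
        have : a k < a (k + 1) := ha (Nat.lt_succ_self k)
        push_cast
        omega
    set R : Set ℝ := {x : ℝ | ∃ s ∈ ((fun x : ℤ => (x : ℝ)) '' A), ∃ t ∈ ((fun x : ℤ => (x : ℝ)) '' A),
        t ≤ s ∧ x = s / t} with hRdef
    have hmem : ∀ z : ℝ, z ∈ ((fun x : ℤ => (x : ℝ)) '' A) ↔ ∃ n, z = (a n : ℝ) := by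
      intro z
      constructor
      · rintro ⟨y, hyA, rfl⟩
        rw [← hrange] at hyA
        obtain ⟨n, rfl⟩ := hyA
        exact ⟨n, rfl⟩
      · rintro ⟨n, rfl⟩
        exact ⟨a n, haA n, rfl⟩
    have hfin : ∀ M : ℝ, (R ∩ Set.Iic M).Finite := by
      intro M
      obtain ⟨N, hN⟩ := (eventually_atTop.mp (hlim.eventually_gt_atTop M))
      set K : ℕ := ⌈M * (a N : ℝ)⌉₊ + 1 with hKdef
      have hsub : R ∩ Set.Iic M ⊆ insert (1 : ℝ)
          ((fun p : ℕ × ℕ => (a p.1 : ℝ) / (a p.2 : ℝ)) '' (Set.Iio K ×ˢ Set.Iio K)) := by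
        rintro x ⟨hxR, hxM⟩
        obtain ⟨s, hs, t, ht, hts, rfl⟩ := hxR
        obtain ⟨n, rfl⟩ := (hmem s).mp hs
        obtain ⟨m, rfl⟩ := (hmem t).mp ht
        have hmn : m ≤ n := by
          have : a m ≤ a n := by exact_mod_cast hts
          exact ha.le_iff_le.mp this
        rcases eq_or_lt_of_le hmn with rfl | hmn'
        · left; exact div_self (ne_of_gt (haposR m))
        · right
          have hx1 : (1 : ℝ) ≤ (a n : ℝ) / (a m : ℝ) := (one_le_div (haposR m)).mpr hts
          have hM1 : (1 : ℝ) ≤ M := le_trans hx1 hxM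
          have hmN : m < N := by
            by_contra h
            push_neg at h
            have hlt : M < (a (m + 1) : ℝ) / (a m : ℝ) := hN m h
            have hle2 : (a (m + 1) : ℝ) ≤ (a n : ℝ) := by
              have : a (m + 1) ≤ a n := ha.le_iff_le.mpr (by omega)
              exact_mod_cast this
            have h1 : (a (m + 1) : ℝ) / (a m : ℝ) ≤ (a n : ℝ) / (a m : ℝ) := by
              gcongr
              exact (haposR m).le
            have hxM' : (a n : ℝ) / (a m : ℝ) ≤ M := hxM
            linarith
          have hamN : (a m : ℝ) ≤ (a N : ℝ) := by exact_mod_cast (ha.le_iff_le.mpr hmN.le)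
          have han : (a n : ℝ) ≤ M * (a N : ℝ) := by
            have h1 : (a n : ℝ) ≤ M * (a m : ℝ) := (div_le_iff₀ (haposR m)).mp hxM
            calc (a n : ℝ) ≤ M * (a m : ℝ) := h1
              _ ≤ M * (a N : ℝ) := by
                apply mul_le_mul_of_nonneg_left hamN (by linarith)
          have hnK : n < K := by
            have h2 : (n : ℝ) ≤ (a n : ℝ) := by
              have h5 := hage n
              have h6 := hapos 0
              have : (n : ℤ) ≤ a n := by omega
              exact_mod_cast this
            have h3 : (n : ℝ) ≤ M * (a N : ℝ) := le_trans h2 han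
            have h4 : n ≤ ⌈M * (a N : ℝ)⌉₊ := by
              calc n = ⌈(n : ℝ)⌉₊ := (Nat.ceil_natCast n).symm
                _ ≤ ⌈M * (a N : ℝ)⌉₊ := Nat.ceil_mono h3
            omega
          refine ⟨(n, m), ?_, rfl⟩
          exact Set.mem_prod.mpr ⟨hnK, lt_trans hmn' hnK⟩
      have hfin2 : ((fun p : ℕ × ℕ => (a p.1 : ℝ) / (a p.2 : ℝ)) '' (Set.Iio K ×ˢ Set.Iio K)).Finite :=
        ((Set.finite_Iio K).prod (Set.finite_Iio K)).image _
      exact (hfin2.insert 1).subset hsub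
    have hcd := aux_closed_discrete R hfin
    rw [hRdef] at hcd
    exact hcd
  refine ⟨hgeo, fun x : ℤ => (x : ℝ), ?_, hgeo, 0, ?_⟩
  · intro b hb
    have : (0:ℤ) < b := hApos b hb
    simpa using (by exact_mod_cast this : (0:ℝ) < (b:ℝ))
  · intro b hb
    simp
end

section
/- Fix real numbers c > 0 and b > 1, and for each n ∈ ℕ let a_n = ⌊c·bⁿ⌋ be the integer part of c·bⁿ. Then the set A = {a_n : n ∈ ℕ} ⊆ ℤ is geometrically sparse. -/
open Filter Pointwise

/-- An ε-separated set of reals is closed and discrete. -/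
lemma sep_closed_discrete (S : Set ℝ) (ε : ℝ) (hε : 0 < ε)
    (h : ∀ x ∈ S, ∀ y ∈ S, x ≠ y → ε ≤ |x - y|) : IsClosed S ∧ DiscreteTopology S := by
  rw [← isDiscrete_iff_discreteTopology, isClosed_and_discrete_iff]
  intro x
  rw [Filter.disjoint_principal_right]
  by_cases hx : ∃ y ∈ S, y ≠ x ∧ dist x y < ε / 2
  · obtain ⟨y, hyS, hyx, hxy⟩ := hx
    have hr : 0 < dist x y := dist_pos.mpr (Ne.symm hyx)
    have hsub : Metric.ball x (dist x y) ∩ {x}ᶜ ⊆ Sᶜ := by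
      intro z ⟨hz1, hz2⟩ hzS
      have hzx : dist x z < dist x y := by simpa [Metric.mem_ball, dist_comm] using hz1
      have hzy : z ≠ y := fun h => by simp [h] at hzx
      have h1 := h z hzS y hyS hzy
      rw [← Real.dist_eq] at h1
      have h2 : ε ≤ dist z x + dist x y := le_trans h1 (dist_triangle z x y)
      rw [dist_comm z x] at h2
      linarith
    exact mem_nhdsWithin.mpr ⟨Metric.ball x (dist x y), Metric.isOpen_ball,
      Metric.mem_ball_self hr, hsub⟩
  · push_neg at hx
    refine mem_nhdsWithin.mpr ⟨Metric.ball x (ε / 2), Metric.isOpen_ball,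
      Metric.mem_ball_self (by linarith), ?_⟩
    intro z ⟨hz1, hz2⟩ hzS
    have hzx : z ≠ x := hz2
    have h1 : dist x z < ε / 2 := by simpa [Metric.mem_ball, dist_comm] using hz1
    exact absurd h1 (not_lt.mpr (hx z hzS hzx))

/-- For reals `c > 0` and `b > 1`, the set `A = {⌊c·bⁿ⌋ : n ∈ ℕ}` is
geometrically sparse. -/
theorem geomSparse_floor_geometric (c b : ℝ) (hc : 0 < c) (hb : 1 < b) :
    GeomSparse {x : ℤ | ∃ n : ℕ, x = ⌊c * b ^ n⌋} := by
  set A : Set ℤ := {x : ℤ | ∃ n : ℕ, x = ⌊c * b ^ n⌋} with hA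
  have hb0 : (0:ℝ) < b := lt_trans one_pos hb
  classical
  refine ⟨fun a => if h : ∃ n : ℕ, a = ⌊c * b ^ n⌋ then c * b ^ h.choose else 1, ?_, ?_, 1, ?_⟩
  · intro a ha
    simp only [hA, Set.mem_setOf_eq] at ha
    simp only [dif_pos ha]
    positivity
  · -- IsGeometric
    set f : ℤ → ℝ := fun a => if h : ∃ n : ℕ, a = ⌊c * b ^ n⌋ then c * b ^ h.choose else 1
    have hform : ∀ x ∈ {x : ℝ | ∃ s ∈ f '' A, ∃ t ∈ f '' A, t ≤ s ∧ x = s / t},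
        ∃ k : ℕ, x = b ^ k := by
      rintro x ⟨s, ⟨a1, ha1, rfl⟩, t, ⟨a2, ha2, rfl⟩, hts, rfl⟩
      simp only [hA, Set.mem_setOf_eq] at ha1 ha2
      simp only [f, dif_pos ha1, dif_pos ha2] at hts ⊢
      set m := ha1.choose
      set n := ha2.choose
      have hnm : n ≤ m := by
        have : b ^ n ≤ b ^ m := by
          have := hts
          rw [mul_le_mul_iff_right₀ hc] at this
          exact this
        exact (pow_le_pow_iff_right₀ hb).mp this
      refine ⟨m - n, ?_⟩
      rw [pow_sub₀ b (ne_of_gt hb0) hnm, mul_div_mul_left _ _ (ne_of_gt hc), div_eq_mul_inv]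
    have hsep : ∀ x ∈ {x : ℝ | ∃ s ∈ f '' A, ∃ t ∈ f '' A, t ≤ s ∧ x = s / t},
        ∀ y ∈ {x : ℝ | ∃ s ∈ f '' A, ∃ t ∈ f '' A, t ≤ s ∧ x = s / t},
        x ≠ y → b - 1 ≤ |x - y| := by
      intro x hx y hy hxy
      obtain ⟨j, rfl⟩ := hform x hx
      obtain ⟨k, rfl⟩ := hform y hy
      have hjk : j ≠ k := fun h => hxy (by rw [h])
      have key : ∀ p q : ℕ, p < q → b - 1 ≤ b ^ q - b ^ p := by
        intro p q hpq
        have h1 : (1:ℝ) ≤ b ^ p := one_le_pow₀ hb.le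
        have h2 : b ≤ b ^ (q - p) := le_self_pow₀ hb.le (by omega)
        have h3 : b ^ q = b ^ p * b ^ (q - p) := by rw [← pow_add]; congr 1; omega
        nlinarith [h1, h2, h3]
      rcases lt_or_gt_of_ne hjk with h | h
      · have hk := key j k h
        rw [abs_sub_comm, abs_of_nonneg (by linarith)]
        exact hk
      · have hk := key k j h
        rw [abs_of_nonneg (by linarith)]
        exact hk
    exact ⟨(sep_closed_discrete _ (b - 1) (by linarith) hsep).1,
      (sep_closed_discrete _ (b - 1) (by linarith) hsep).2⟩
  · intro a ha
    simp only [hA, Set.mem_setOf_eq] at ha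
    simp only [dif_pos ha]
    have hfl := ha.choose_spec
    set n := ha.choose
    have h1 : (⌊c * b ^ n⌋ : ℝ) ≤ c * b ^ n := Int.floor_le _
    have h2 : c * b ^ n - 1 < (⌊c * b ^ n⌋ : ℝ) := Int.sub_one_lt_floor _
    rw [hfl, abs_le]
    constructor <;> linarith
end

section
/- Let d ≥ 0 and c_0, …, c_d ∈ ℤ, and let f(x) = x^{d+1} − c_d x^d − ⋯ − c_1 x − c_0. Suppose f is irreducible over ℚ, f has a real root λ > 1, and every complex root μ of f with μ ≠ λ satisfies |μ| ≤ 1. Let (a_n)_{n=0}^∞ be a sequence of integers satisfying a_{n+1} = c_d a_n + c_{d−1} a_{n−1} + ⋯ + c_0 a_{n−d} for all n ≥ d, and let A = {a_n : n ∈ ℕ}. If A is infinite, then either A or −A = {−a : a ∈ A} is geometrically sparse. -/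
open Filter Pointwise

/-!
Since `f` is irreducible over `ℚ`, its `d + 1` complex roots are simple, so every solution of the
recurrence is `a n = ∑ w μ * μ ^ n` over the roots `μ` of `f`: the initial values are matched by
inverting a Vandermonde matrix. All roots other than `λ` have modulus at most `1`, hence
`a n = r λ ^ n + O(1)` with `r = Re (w λ)`, and `r ≠ 0` because `A` is infinite. So `n ↦ |r| λ ^ n`
approximates `±a n`, and the ratios of its values are powers of `λ`, which are `λ - 1` apart.
-/

open Polynomial

namespace LinearRecurrence

variable {K : Type*} [Field K] (E : LinearRecurrence K)

open Matrix in
theorem exists_eq_sum_mul_pow {μ : Fin E.order → K} (hμ : Function.Injective μ)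
    (hroot : ∀ j, E.charPoly.IsRoot (μ j)) {u : ℕ → K} (hu : E.IsSolution u) :
    ∃ w : Fin E.order → K, ∀ n, u n = ∑ j, w j * μ j ^ n := by
  set V := vandermonde μ
  have hV : IsUnit V.det := isUnit_iff_ne_zero.mpr (det_vandermonde_ne_zero_iff.mpr hμ)
  set w := (fun i : Fin E.order => u i) ᵥ* V⁻¹
  have hw : w ᵥ* V = fun i : Fin E.order => u i := by
    rw [vecMul_vecMul, nonsing_inv_mul _ hV, vecMul_one]
  have hsol : E.IsSolution fun n => ∑ j, w j * μ j ^ n := by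
    rw [E.is_sol_iff_mem_solSpace]
    convert E.solSpace.sum_mem (t := Finset.univ) fun j _ => Submodule.smul_mem _ (w j)
      ((E.is_sol_iff_mem_solSpace _).mp ((E.geom_sol_iff_root_charPoly _).mpr (hroot j)))
    simp [Finset.sum_apply]
  refine ⟨w, congrFun <| (E.eq_iff_eqOn_range_order _ _ hu hsol).mpr fun i hi => ?_⟩
  have hi : i < E.order := Finset.mem_range.mp hi
  simpa [vecMul, dotProduct, V] using (congrFun hw ⟨i, hi⟩).symm

theorem exists_eq_sum_roots_mul_pow [IsAlgClosed K] [DecidableEq K] (hsep : E.charPoly.Separable)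
    {u : ℕ → K} (hu : E.IsSolution u) :
    ∃ w : K → K, ∀ n, u n = ∑ z ∈ E.charPoly.roots.toFinset, w z * z ^ n := by
  set s := E.charPoly.roots.toFinset
  have hcard : s.card = E.order := by
    rw [Multiset.toFinset_card_of_nodup (nodup_roots hsep), IsAlgClosed.card_roots_eq_natDegree,
      natDegree_eq_of_degree_eq_some E.charPoly_degree_eq_order]
  set e : s ≃ Fin E.order := s.equivFinOfCardEq hcard
  obtain ⟨w, hw⟩ := E.exists_eq_sum_mul_pow (μ := fun j => e.symm j)
    (Subtype.val_injective.comp e.symm.injective)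
    (fun j => isRoot_of_mem_roots (Multiset.mem_toFinset.mp (e.symm j).2)) hu
  refine ⟨fun z => if hz : z ∈ s then w (e ⟨z, hz⟩) else 0, fun n => ?_⟩
  rw [hw, ← Finset.sum_coe_sort s, ← e.symm.sum_comp]
  simp

end LinearRecurrence

theorem exists_abs_sub_mul_pow_le_of_eq_sum {lam : ℝ} {s : Finset ℂ} (hlam : (lam : ℂ) ∈ s)
    (hs : ∀ z ∈ s, z ≠ lam → ‖z‖ ≤ 1) {w : ℂ → ℂ} {u : ℕ → ℝ}
    (hu : ∀ n, (u n : ℂ) = ∑ z ∈ s, w z * z ^ n) :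
    ∃ r C : ℝ, ∀ n, |u n - r * lam ^ n| ≤ C := by
  refine ⟨(w lam).re, ∑ z ∈ s.erase lam, ‖w z‖, fun n => ?_⟩
  have hdiff : (u n : ℂ) - w lam * lam ^ n = ∑ z ∈ s.erase lam, w z * z ^ n := by
    rw [hu, ← Finset.add_sum_erase s _ hlam, add_sub_cancel_left]
  calc |u n - (w lam).re * lam ^ n| = |((u n : ℂ) - w lam * lam ^ n).re| := by
        simp [← Complex.ofReal_pow]
    _ ≤ ‖(u n : ℂ) - w lam * lam ^ n‖ := Complex.abs_re_le_norm _
    _ ≤ ∑ z ∈ s.erase lam, ‖w z * z ^ n‖ := hdiff ▸ norm_sum_le _ _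
    _ ≤ ∑ z ∈ s.erase lam, ‖w z‖ := Finset.sum_le_sum fun z hz => by
        have hz1 := hs z (Finset.mem_of_mem_erase hz) (Finset.ne_of_mem_erase hz)
        rw [norm_mul, norm_pow]
        exact mul_le_of_le_one_right (norm_nonneg _) (pow_le_one₀ (norm_nonneg _) hz1)

theorem exists_abs_sub_mul_pow_le_of_isSolution {E : LinearRecurrence ℂ}
    (hsep : E.charPoly.Separable) {lam : ℝ} (hlam : E.charPoly.IsRoot lam)
    (hroots : ∀ z, E.charPoly.IsRoot z → z ≠ lam → ‖z‖ ≤ 1) {u : ℕ → ℝ}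
    (hu : E.IsSolution fun n => (u n : ℂ)) :
    ∃ r C : ℝ, ∀ n, |u n - r * lam ^ n| ≤ C := by
  classical
  obtain ⟨w, hw⟩ := E.exists_eq_sum_roots_mul_pow hsep hu
  have hmem {z : ℂ} : z ∈ E.charPoly.roots.toFinset ↔ E.charPoly.IsRoot z := by
    rw [Multiset.mem_toFinset, mem_roots E.charPoly_monic.ne_zero]
  exact exists_abs_sub_mul_pow_le_of_eq_sum (hmem.2 hlam) (fun z hz => hroots z (hmem.1 hz)) hw

theorem ne_zero_of_abs_sub_mul_pow_le {lam r C : ℝ} {b : ℕ → ℤ} (hinf : (Set.range b).Infinite)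
    (hb : ∀ n, |(b n : ℝ) - r * lam ^ n| ≤ C) : r ≠ 0 := by
  rintro rfl
  refine hinf ((Set.finite_Icc (-⌈C⌉) ⌈C⌉).subset ?_)
  rintro _ ⟨n, rfl⟩
  have : |(b n : ℝ)| ≤ ⌈C⌉ := by simpa using (hb n).trans (Int.le_ceil C)
  exact abs_le.mp (by exact_mod_cast this)

theorem pairwise_le_dist_range_pow {lam : ℝ} (hlam : 1 < lam) :
    (Set.range (lam ^ · : ℕ → ℝ)).Pairwise fun x y => lam - 1 ≤ dist x y := by
  suffices ∀ j k : ℕ, k < j → lam - 1 ≤ lam ^ j - lam ^ k by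
    rintro _ ⟨j, rfl⟩ _ ⟨k, rfl⟩ hne
    rcases lt_or_gt_of_ne (ne_of_apply_ne (lam ^ ·) hne) with h | h
    · rw [dist_comm, Real.dist_eq, abs_of_nonneg (by linarith [this k j h, hlam])]
      exact this k j h
    · rw [Real.dist_eq, abs_of_nonneg (by linarith [this j k h, hlam])]
      exact this j k h
  intro j k hkj
  calc lam - 1 ≤ lam ^ k * (lam - 1) := le_mul_of_one_le_left (by linarith) (one_le_pow₀ hlam.le)
    _ = lam ^ (k + 1) - lam ^ k := by ring
    _ ≤ lam ^ j - lam ^ k := by gcongr; exacts [hlam.le, hkj]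

theorem isGeometric_of_subset_range_mul_pow {lam r : ℝ} (hlam : 1 < lam) (hr : 0 < r) {S : Set ℝ}
    (hS : S ⊆ Set.range (r * lam ^ · : ℕ → ℝ)) : IsGeometric S := by
  set T := {x : ℝ | ∃ s ∈ S, ∃ t ∈ S, t ≤ s ∧ x = s / t}
  have hT : T ⊆ Set.range (lam ^ · : ℕ → ℝ) := by
    rintro _ ⟨_, hs, _, ht, hts, rfl⟩
    obtain ⟨m, rfl⟩ := hS hs
    obtain ⟨n, rfl⟩ := hS ht
    have hnm : n ≤ m := (pow_le_pow_iff_right₀ hlam).mp (le_of_mul_le_mul_left hts hr)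
    refine ⟨m - n, ?_⟩
    dsimp only
    rw [mul_div_mul_left _ _ hr.ne', pow_sub₀ _ (by positivity) hnm, div_eq_mul_inv]
  have hsep := (pairwise_le_dist_range_pow hlam).mono hT
  have hε : 0 < lam - 1 := sub_pos.mpr hlam
  exact ⟨Metric.isClosed_of_pairwise_le_dist hε hsep,
    .of_forall_le_dist hε fun x y hxy => hsep x.2 y.2 (Subtype.coe_injective.ne hxy)⟩

theorem geomSparse_range_of_abs_sub_le {lam r C : ℝ} (hlam : 1 < lam) (hr : 0 < r) {b : ℕ → ℤ}
    (hb : ∀ n, |(b n : ℝ) - r * lam ^ n| ≤ C) : GeomSparse (Set.range b) := by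
  classical
  set g : ℤ → ℝ := fun x => r * lam ^ Function.invFun b x
  refine ⟨g, fun _ _ => by positivity, ?_, C, ?_⟩
  · exact isGeometric_of_subset_range_mul_pow hlam hr (by rintro _ ⟨x, -, rfl⟩; exact ⟨_, rfl⟩)
  · rintro x hx
    simpa only [g, Function.invFun_eq hx] using hb (Function.invFun b x)

theorem geomSparse_range_or_neg_of_abs_sub_le {lam r C : ℝ} (hlam : 1 < lam) (hr : r ≠ 0)
    {b : ℕ → ℤ} (hb : ∀ n, |(b n : ℝ) - r * lam ^ n| ≤ C) :
    GeomSparse (Set.range b) ∨ GeomSparse (-Set.range b) := by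
  rcases hr.lt_or_gt with hr | hr
  · right
    rw [Set.neg_range]
    refine geomSparse_range_of_abs_sub_le (C := C) hlam (neg_pos.mpr hr) fun n => ?_
    rw [← abs_neg]
    convert hb n using 2
    push_cast
    ring
  · exact .inl (geomSparse_range_of_abs_sub_le hlam hr hb)

/-- Let `f(x) = x^{d+1} − c_d x^d − ⋯ − c_0` be irreducible over `ℚ`, with a real
root `λ > 1` such that every other complex root `μ` satisfies `|μ| ≤ 1`. If `(a_n)` is an
integer sequence satisfying the recurrence `a_{n+1} = c_d a_n + ⋯ + c_0 a_{n−d}` for `n ≥ d`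
and `A = {a_n : n ∈ ℕ}` is infinite, then `A` or `−A` is geometrically sparse. -/
theorem geomSparse_of_pisot_salem_recurrence (d : ℕ) (c : Fin (d + 1) → ℤ)
    (f : Polynomial ℤ)
    (hf : f = Polynomial.X ^ (d + 1) -
      ∑ i : Fin (d + 1), Polynomial.C (c i) * Polynomial.X ^ (i : ℕ))
    (hirr : Irreducible (f.map (Int.castRingHom ℚ)))
    (lam : ℝ) (hlam : 1 < lam) (hroot : Polynomial.aeval lam f = 0)
    (hroots : ∀ μ : ℂ, Polynomial.aeval μ f = 0 → μ ≠ (lam : ℂ) → ‖μ‖ ≤ 1)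
    (a : ℕ → ℤ)
    (hrec : ∀ n : ℕ, d ≤ n → a (n + 1) = ∑ i : Fin (d + 1), c i * a (n - d + i))
    (hinf : (Set.range a).Infinite) :
    GeomSparse (Set.range a) ∨ GeomSparse (-(Set.range a)) := by
  set E : LinearRecurrence ℂ := ⟨d + 1, fun i => c i⟩
  have hE : E.charPoly = (f.map (Int.castRingHom ℚ)).map (algebraMap ℚ ℂ) := by
    rw [hf, Polynomial.map_map]
    simp [E, LinearRecurrence.charPoly, ← C_mul_X_pow_eq_monomial, Polynomial.map_sum]
  have hroot_iff (z : ℂ) : E.charPoly.IsRoot z ↔ aeval z f = 0 := by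
    rw [hE, IsRoot, eval_map_algebraMap, ← algebraMap_int_eq, aeval_map_algebraMap]
  have hsol : E.IsSolution fun n => ((a n : ℝ) : ℂ) := fun n => by
    have h := hrec (n + d) le_add_self
    rw [Nat.add_sub_cancel, add_assoc] at h
    simp [E, h]
  have hlam_root : aeval (lam : ℂ) f = 0 := by
    rw [← Complex.coe_algebraMap, aeval_algebraMap_apply, hroot, map_zero]
  obtain ⟨r, C, happrox⟩ := exists_abs_sub_mul_pow_le_of_isSolution (hE ▸ hirr.separable.map)
    ((hroot_iff lam).2 hlam_root) (fun z hz => hroots z ((hroot_iff z).1 hz)) hsol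
  exact geomSparse_range_or_neg_of_abs_sub_le hlam (ne_zero_of_abs_sub_mul_pow_le hinf happrox)
    happrox
end

section
/- Suppose A ⊆ ℤ⁺ is infinite and geometrically sparse, with strictly increasing enumeration (a_n)_{n=0}^∞. Then there exist real numbers c > 1 and Θ ≥ 0, a sequence (λ_m)_{m=0}^∞ of positive real numbers, and a weakly increasing surjective function f : ℕ → ℕ such that: (i) the set {λ_m : m ∈ ℕ} is geometric; (ii) λ_{m+1} ≥ c·λ_m for all m ∈ ℕ; (iii) |a_n − λ_{f(n)}| ≤ Θ for all n ∈ ℕ. Moreover, the counting function A(n) = |A ∩ {1,…,n}| is O(log n), i.e. there is a constant C > 0 with A(n) ≤ C·log n for all n ≥ 2. -/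
open Filter Pointwise

open Topology

/-!
Since the ratio set of `F(A)` is closed and discrete, `1` is isolated in it, so any two distinct
values of `F` on `A` differ by a factor at least some `c > 1`. As `F(aₙ)` stays within `C` of
`aₙ → ∞`, a descent `F(aₙ₊₁) < F(aₙ)` would force `(c - 1) F(aₙ₊₁) < 2C`; hence `F ∘ a` is
eventually monotone, and its distinct values, listed increasingly, are the `λₘ`. Every element of
`A ∩ [1, n]` lies within `Θ` of some `λₘ ≤ n + Θ`, and `λₘ ≥ cᵐ λ₀` leaves `O(log n)` such `m`,
each accounting for at most `2Θ + 1` integers.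
-/

def ratioSet (S : Set ℝ) : Set ℝ := {x | ∃ s ∈ S, ∃ t ∈ S, t ≤ s ∧ x = s / t}

lemma isGeometric_iff_disjoint {S : Set ℝ} :
    IsGeometric S ↔ ∀ x, Disjoint (𝓝[≠] x) (𝓟 (ratioSet S)) := by
  rw [IsGeometric, ← isDiscrete_iff_discreteTopology, ← isClosed_and_discrete_iff]
  rfl

lemma IsGeometric.mono {S T : Set ℝ} (hS : IsGeometric S) (hTS : T ⊆ S) : IsGeometric T := by
  rw [isGeometric_iff_disjoint] at hS ⊢
  refine fun x ↦ (hS x).mono_right (principal_mono.2 ?_)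
  rintro _ ⟨s, hs, t, ht, hts, rfl⟩
  exact ⟨s, hTS hs, t, hTS ht, hts, rfl⟩

lemma IsGeometric.exists_one_lt_mul_le {S : Set ℝ} (hS : IsGeometric S) (hpos : ∀ s ∈ S, 0 < s) :
    ∃ c > 1, ∀ s ∈ S, ∀ t ∈ S, t < s → c * t ≤ s := by
  have hgap : (ratioSet S)ᶜ ∈ 𝓝[>] (1 : ℝ) := disjoint_principal_right.1 <|
    (isGeometric_iff_disjoint.1 hS 1).mono_left (nhdsWithin_mono _ fun y hy ↦ ne_of_gt hy)
  obtain ⟨c, hc, hcR⟩ := mem_nhdsGT_iff_exists_Ioo_subset.1 hgap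
  refine ⟨c, hc, fun s hs t ht hts ↦ ?_⟩
  have ht0 := hpos t ht
  by_contra! hlt
  exact hcR ⟨(one_lt_div ht0).2 hts, (div_lt_iff₀ ht0).2 hlt⟩ ⟨s, hs, t, ht, hts.le, rfl⟩

lemma exists_lt_succ_of_lt {α : Type*} [LinearOrder α] {g : ℕ → α} {n m : ℕ} (hnm : n ≤ m)
    (hg : g n < g m) : ∃ k, n ≤ k ∧ k < m ∧ g k < g (k + 1) := by
  induction m, hnm using Nat.le_induction with
  | base => exact absurd hg (lt_irrefl _)
  | succ m hnm ih =>
    by_cases h : g n < g m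
    · obtain ⟨k, hnk, hkm, hk⟩ := ih h
      exact ⟨k, hnk, hkm.trans (lt_add_one m), hk⟩
    · exact ⟨m, hnm, lt_add_one m, (not_lt.1 h).trans_lt hg⟩

theorem Monotone.exists_strictMono_comp_eq {α : Type*} [LinearOrder α] {g : ℕ → α}
    (hg : Monotone g) (hunb : ∀ n, ∃ m, g n < g m) :
    ∃ (lam : ℕ → α) (f : ℕ → ℕ), StrictMono lam ∧ Monotone f ∧ Function.Surjective f ∧
      ∀ n, lam (f n) = g n := by
  set p : ℕ → Prop := fun k ↦ g k < g (k + 1)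
  have hinf : (Set.ofPred p).Infinite := by
    refine Set.infinite_of_forall_exists_gt fun n ↦ ?_
    obtain ⟨m, hm⟩ := hunb (n + 1)
    have hnm : n + 1 ≤ m := le_of_lt (hg.reflect_lt hm)
    obtain ⟨k, hnk, -, hk⟩ := exists_lt_succ_of_lt hnm hm
    exact ⟨k, hk, hnk⟩
  have hcount : ∀ n m, Nat.count p n = Nat.count p m → g n = g m := by
    suffices ∀ n m, n ≤ m → g n < g m → Nat.count p n < Nat.count p m by
      intro n m h
      rcases le_total n m with hnm | hmn
      · exact (hg hnm).eq_of_not_lt fun hlt ↦ (this n m hnm hlt).ne h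
      · exact ((hg hmn).eq_of_not_lt fun hlt ↦ (this m n hmn hlt).ne h.symm).symm
    intro n m hnm hlt
    obtain ⟨k, hnk, hkm, hk⟩ := exists_lt_succ_of_lt hnm hlt
    exact (Nat.count_monotone p hnk).trans_lt (Nat.count_strict_mono hk hkm)
  refine ⟨fun m ↦ g (Nat.nth p m), Nat.count p, strictMono_nat_of_lt_succ fun m ↦ ?_,
    Nat.count_monotone p, fun m ↦ ⟨Nat.nth p m, Nat.count_nth_of_infinite hinf m⟩,
    fun n ↦ hcount _ _ (Nat.count_nth_of_infinite hinf _)⟩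
  exact (Nat.nth_mem_of_infinite hinf m).trans_le (hg (Nat.nth_strictMono hinf (lt_add_one m)))

lemma StrictMono.apply_zero_add_le {a : ℕ → ℤ} (ha : StrictMono a) (n : ℕ) : a 0 + n ≤ a n := by
  induction n with
  | zero => simp
  | succ n ih => have := ha (lt_add_one n); push_cast; omega

lemma StrictMono.tendsto_atTop_of_abs_sub_le {a : ℕ → ℤ} {u : ℕ → ℝ} {C : ℝ} (ha : StrictMono a)
    (hu : ∀ n, |(a n : ℝ) - u n| ≤ C) : Tendsto u atTop atTop := by
  refine tendsto_atTop_mono (fun n ↦ ?_) <| tendsto_atTop_add_const_right _ (-C) <|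
    tendsto_atTop_add_const_left _ (a 0 : ℝ) tendsto_natCast_atTop_atTop
  have : ((a 0 + n : ℤ) : ℝ) ≤ a n := by exact_mod_cast ha.apply_zero_add_le n
  push_cast at this
  linarith [(abs_le.1 (hu n)).2]

lemma monotone_comp_max_of_mul_le {a : ℕ → ℤ} {u : ℕ → ℝ} {c C : ℝ} {N : ℕ} (ha : StrictMono a)
    (hsep : ∀ m n, u m < u n → c * u m ≤ u n) (hu : ∀ n, |(a n : ℝ) - u n| ≤ C)
    (hN : ∀ n ≥ N, 2 * C < (c - 1) * u n) : Monotone fun n ↦ u (max n N) := by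
  refine monotone_nat_of_le_succ fun n ↦ ?_
  rcases lt_or_ge n N with hn | hn
  · rw [max_eq_right hn.le, max_eq_right hn]
  rw [max_eq_left hn, max_eq_left (hn.trans n.le_succ)]
  by_contra! hlt
  have hstep : (a n : ℝ) < a (n + 1) := by exact_mod_cast ha (lt_add_one n)
  have hdrop := hsep _ _ hlt
  have hlarge := hN (n + 1) (hn.trans n.le_succ)
  linarith [abs_le.1 (hu n), abs_le.1 (hu (n + 1))]

lemma StrictMono.exists_monotone_tendsto_comp_max {a : ℕ → ℤ} {u : ℕ → ℝ} {c C : ℝ}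
    (ha : StrictMono a) (hc : 1 < c) (hsep : ∀ m n, u m < u n → c * u m ≤ u n)
    (hu : ∀ n, |(a n : ℝ) - u n| ≤ C) :
    ∃ N, Monotone (fun n ↦ u (max n N)) ∧ Tendsto (fun n ↦ u (max n N)) atTop atTop := by
  have hutop := ha.tendsto_atTop_of_abs_sub_le hu
  obtain ⟨N, hN⟩ := eventually_atTop.1 <|
    (hutop.const_mul_atTop (sub_pos.2 hc)).eventually_gt_atTop (2 * C)
  exact ⟨N, monotone_comp_max_of_mul_le ha hsep hu hN,
    hutop.congr' <| eventually_atTop.2 ⟨N, fun n hn ↦ congrArg u (max_eq_left hn).symm⟩⟩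

lemma Monotone.abs_sub_apply_max_le {a : ℕ → ℤ} (ha : Monotone a) (n N : ℕ) :
    |(a n : ℝ) - a (max n N)| ≤ a N - a 0 := by
  have h0N : (a 0 : ℝ) ≤ a N := by exact_mod_cast ha (Nat.zero_le N)
  rcases le_total n N with hn | hn
  · have h0n : (a 0 : ℝ) ≤ a n := by exact_mod_cast ha (Nat.zero_le n)
    have hnN : (a n : ℝ) ≤ a N := by exact_mod_cast ha hn
    rw [max_eq_right hn, abs_of_nonpos (by linarith)]
    linarith
  · rwa [max_eq_left hn, sub_self, abs_zero, sub_nonneg]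

lemma ncard_le_mul_of_forall_exists_abs_sub_le {S : Set ℤ} {lam : ℕ → ℝ} {Θ : ℝ} {K : ℕ}
    (hS : ∀ x ∈ S, ∃ m < K, |(x : ℝ) - lam m| ≤ Θ) : S.ncard ≤ K * (2 * ⌈Θ⌉₊ + 1) := by
  set T : ℤ := (⌈Θ⌉₊ : ℤ)
  set cover := (Finset.range K).biUnion fun m ↦ Finset.Icc (⌈lam m⌉ - T) (⌈lam m⌉ + T)
  have hsub : S ⊆ cover := by
    intro x hx
    obtain ⟨m, hm, hxm⟩ := hS x hx
    rw [abs_le] at hxm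
    have hΘT : Θ ≤ T := by simpa [T] using Nat.le_ceil Θ
    have hlo : ((⌈lam m⌉ - T - 1 : ℤ) : ℝ) < x := by
      push_cast; linarith [Int.ceil_lt_add_one (lam m)]
    have hhi : (x : ℝ) ≤ ((⌈lam m⌉ + T : ℤ) : ℝ) := by
      push_cast; linarith [Int.le_ceil (lam m)]
    simp only [cover, Finset.coe_biUnion, Finset.coe_range, Set.mem_iUnion, Finset.coe_Icc]
    exact ⟨m, hm, Int.sub_one_lt_iff.1 (by exact_mod_cast hlo), by exact_mod_cast hhi⟩
  calc S.ncard ≤ cover.card := by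
        simpa using Set.ncard_le_ncard hsub cover.finite_toSet
    _ ≤ ∑ m ∈ Finset.range K, (Finset.Icc (⌈lam m⌉ - T) (⌈lam m⌉ + T)).card :=
        Finset.card_biUnion_le
    _ = K * (2 * ⌈Θ⌉₊ + 1) := by
        rw [Finset.sum_const_nat (m := 2 * ⌈Θ⌉₊ + 1) fun m _ ↦ by rw [Int.card_Icc]; omega,
          Finset.card_range]

lemma natCast_le_of_pow_mul_le {c l Θ : ℝ} {m n : ℕ} (hc : 1 < c) (hl : 0 < l) (hn : 1 ≤ n)
    (h : c ^ m * l ≤ n + Θ) : (m : ℝ) ≤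
      (Real.log n + (Real.log (1 + |Θ|) + |Real.log l|)) / Real.log c := by
  have hpos : 0 < c ^ m * l := by positivity
  have hn' : (1 : ℝ) ≤ n := by exact_mod_cast hn
  rw [le_div_iff₀ (Real.log_pos hc), ← Real.log_pow]
  calc Real.log (c ^ m) = Real.log (c ^ m * l) - Real.log l := by
        rw [Real.log_mul (by positivity) hl.ne']; ring
    _ ≤ Real.log (n * (1 + |Θ|)) - Real.log l := by
        gcongr 1
        exact Real.log_le_log hpos (by nlinarith [le_abs_self Θ, abs_nonneg Θ])
    _ ≤ _ := by
        rw [Real.log_mul (by positivity) (by positivity)]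
        linarith [neg_le_abs (Real.log l)]

lemma exists_pos_mul_log_ge (α β : ℝ) :
    ∃ K : ℝ, 0 < K ∧ ∀ n : ℕ, 2 ≤ n → α * Real.log n + β ≤ K * Real.log n := by
  have hlog2 : 0 < Real.log 2 := Real.log_pos one_lt_two
  refine ⟨|α| + |β| / Real.log 2 + 1, by positivity, fun n hn ↦ ?_⟩
  have hlogn : Real.log 2 ≤ Real.log n := Real.log_le_log two_pos (by exact_mod_cast hn)
  have hβ : β ≤ |β| / Real.log 2 * Real.log n := by
    calc β ≤ |β| / Real.log 2 * Real.log 2 := by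
          rw [div_mul_cancel₀ _ hlog2.ne']; exact le_abs_self β
      _ ≤ _ := by gcongr
  nlinarith [le_abs_self α, abs_nonneg α]

theorem ncard_inter_Icc_le_mul_log {A : Set ℤ} {lam : ℕ → ℝ} {c Θ : ℝ} (hc : 1 < c)
    (hlam0 : 0 < lam 0) (hgrow : ∀ m, c * lam m ≤ lam (m + 1))
    (hA : ∀ x ∈ A, ∃ m, |(x : ℝ) - lam m| ≤ Θ) :
    ∃ K : ℝ, 0 < K ∧ ∀ n : ℕ, 2 ≤ n →
      ((A ∩ Set.Icc 1 (n : ℤ)).ncard : ℝ) ≤ K * Real.log n := by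
  have hlogc : 0 < Real.log c := Real.log_pos hc
  set E := Real.log (1 + |Θ|) + |Real.log (lam 0)|
  set T := 2 * ⌈Θ⌉₊ + 1
  obtain ⟨K, hK, hKlog⟩ := exists_pos_mul_log_ge (T / Real.log c) (T * (E / Real.log c + 1))
  refine ⟨K, hK, fun n hn ↦ ?_⟩
  set B := (Real.log n + E) / Real.log c
  have hE : 0 ≤ E := add_nonneg (Real.log_nonneg (by linarith [abs_nonneg Θ])) (abs_nonneg _)
  have hB : 0 ≤ B := div_nonneg (add_nonneg (Real.log_natCast_nonneg n) hE) hlogc.le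
  have hcount : (A ∩ Set.Icc 1 (n : ℤ)).ncard ≤ (⌊B⌋₊ + 1) * T := by
    refine ncard_le_mul_of_forall_exists_abs_sub_le (lam := lam) fun x hx ↦ ?_
    obtain ⟨m, hm⟩ := hA x hx.1
    have hxn : (x : ℝ) ≤ n := by exact_mod_cast hx.2.2
    have hmB : (m : ℝ) ≤ B := natCast_le_of_pow_mul_le hc hlam0 (one_le_two.trans hn) <|
      calc c ^ m * lam 0 ≤ lam m := geom_le (by linarith) m fun k _ ↦ hgrow k
        _ ≤ n + Θ := by linarith [abs_le.1 hm]
    exact ⟨m, Nat.lt_succ_of_le (Nat.le_floor hmB), hm⟩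
  calc ((A ∩ Set.Icc 1 (n : ℤ)).ncard : ℝ) ≤ ((⌊B⌋₊ + 1) * T : ℕ) := by exact_mod_cast hcount
    _ ≤ (B + 1) * T := by push_cast; gcongr; exact Nat.floor_le hB
    _ = T / Real.log c * Real.log n + T * (E / Real.log c + 1) := by
        simp only [B]; field_simp; ring
    _ ≤ K * Real.log n := hKlog n hn

theorem geomSparse_structure_general (A : Set ℤ) (hGS : GeomSparse A)
    (a : ℕ → ℤ) (ha : StrictMono a) (hrange : Set.range a = A) :
    (∃ (c Θ : ℝ) (lam : ℕ → ℝ) (f : ℕ → ℕ),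
      1 < c ∧ 0 ≤ Θ ∧ (∀ m, 0 < lam m) ∧ Monotone f ∧ Function.Surjective f ∧
      IsGeometric (Set.range lam) ∧ (∀ m : ℕ, c * lam m ≤ lam (m + 1)) ∧
      ∀ n : ℕ, |(a n : ℝ) - lam (f n)| ≤ Θ) ∧
    ∃ C : ℝ, 0 < C ∧ ∀ n : ℕ, 2 ≤ n →
      (Set.ncard (A ∩ Set.Icc 1 (n : ℤ)) : ℝ) ≤ C * Real.log n := by
  obtain ⟨F, hFpos, hgeom, C, hC⟩ := hGS
  have hmem : ∀ n, a n ∈ A := fun n ↦ hrange ▸ Set.mem_range_self n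
  have hu : ∀ n, |(a n : ℝ) - F (a n)| ≤ C := fun n ↦ hC _ (hmem n)
  have hpos : ∀ v ∈ F '' A, 0 < v := Set.forall_mem_image.2 hFpos
  obtain ⟨c, hc, hsep⟩ := hgeom.exists_one_lt_mul_le hpos
  obtain ⟨N, hmono, htop⟩ := ha.exists_monotone_tendsto_comp_max hc
    (fun m n ↦ hsep _ ⟨_, hmem n, rfl⟩ _ ⟨_, hmem m, rfl⟩) hu
  obtain ⟨lam, f, hlam, hf, hfsurj, hlamf⟩ :=
    hmono.exists_strictMono_comp_eq fun n ↦ (htop.eventually_gt_atTop _).exists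
  have hlamA : ∀ m, lam m ∈ F '' A := fun m ↦ by
    obtain ⟨n, rfl⟩ := hfsurj m
    exact hlamf n ▸ ⟨_, hmem _, rfl⟩
  have hgrow : ∀ m, c * lam m ≤ lam (m + 1) :=
    fun m ↦ hsep _ (hlamA _) _ (hlamA _) (hlam (lt_add_one m))
  have hclose : ∀ n, |(a n : ℝ) - lam (f n)| ≤ C + (a N - a 0) := fun n ↦ by
    rw [hlamf]
    linarith [abs_sub_le (a n : ℝ) (a (max n N)) (F (a (max n N))), hu (max n N),
      ha.monotone.abs_sub_apply_max_le n N]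
  have hnear : ∀ x ∈ A, ∃ m, |(x : ℝ) - lam m| ≤ C + (a N - a 0) := by
    rw [← hrange]
    rintro _ ⟨n, rfl⟩
    exact ⟨f n, hclose n⟩
  exact ⟨⟨c, _, lam, f, hc, (abs_nonneg _).trans (hclose 0), fun m ↦ hpos _ (hlamA m), hf,
    hfsurj, hgeom.mono (Set.range_subset_iff.2 hlamA), hgrow, hclose⟩,
    ncard_inter_Icc_le_mul_log hc (hpos _ (hlamA 0)) hgrow hnear⟩

/-- If `A ⊆ ℤ⁺` is infinite and geometrically sparse with strictly increasing
enumeration `(a_n)`, then there are `c > 1`, `Θ ≥ 0`, positive reals `(λ_m)` with geometric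
range and `λ_{m+1} ≥ c·λ_m`, and a weakly increasing surjection `f : ℕ → ℕ` with
`|a_n − λ_{f(n)}| ≤ Θ`; moreover `A(n) = |A ∩ {1,…,n}|` is `O(log n)`. -/
theorem geomSparse_structure (A : Set ℤ) (hApos : ∀ x ∈ A, 0 < x) (hGS : GeomSparse A)
    (a : ℕ → ℤ) (ha : StrictMono a) (hrange : Set.range a = A) :
    (∃ (c Θ : ℝ) (lam : ℕ → ℝ) (f : ℕ → ℕ),
      1 < c ∧ 0 ≤ Θ ∧ (∀ m, 0 < lam m) ∧ Monotone f ∧ Function.Surjective f ∧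
      IsGeometric (Set.range lam) ∧ (∀ m : ℕ, c * lam m ≤ lam (m + 1)) ∧
      ∀ n : ℕ, |(a n : ℝ) - lam (f n)| ≤ Θ) ∧
    ∃ C : ℝ, 0 < C ∧ ∀ n : ℕ, 2 ≤ n →
      (Set.ncard (A ∩ Set.Icc 1 (n : ℤ)) : ℝ) ≤ C * Real.log n :=
  geomSparse_structure_general A hGS a ha hrange
end

section
/- Let X ⊆ [1,∞) be a closed and discrete subset of ℝ, and let Q = {1/x : x ∈ X}. For k ≥ 1, let Q_k be the set of all sums q_1 + ⋯ + q_k such that each q_i ∈ ±Q = Q ∪ (−Q), |q_1| = 1, and Σ_{i∈I} q_i ≠ 0 for every nonempty I ⊆ {1,…,k}. Then for every k ≥ 1 there exists ε_k > 0 such that |q| > ε_k for all q ∈ Q_k. -/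
open Filter Pointwise

/-! A closed discrete `X` has only finitely many points in each bounded set, so `±Q` has only
finitely many elements of absolute value `≥ d` for each `d > 0`. For such a set `S`, choose thresholds
`1 = δ₀ ≥ δ₁ ≥ ⋯` so that every nonzero sum of at most `k` elements of `S` of size `≥ δₙ` has
absolute value `≥ (k + 1) δₙ₊₁` (there are only finitely many such sums). By pigeonhole one of
the `k + 1` windows `[δⱼ₊₁, δⱼ)` contains no `|qᵢ|`; the terms with `|qᵢ| ≥ δⱼ` include `q₁`,
so their sum is nonzero and of size `≥ (k + 1) δⱼ₊₁`, while the others add up to at most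
`k δⱼ₊₁`. -/

lemma Set.Finite.exists_pos_le_abs {S : Set ℝ} (hS : S.Finite) :
    ∃ m > 0, ∀ s ∈ S, s ≠ 0 → m ≤ |s| := by
  obtain ⟨m, hm, hball⟩ :=
    Metric.isOpen_iff.1 (hS.sdiff (t := {0})).isClosed.isOpen_compl 0 (by simp)
  refine ⟨m, hm, fun s hs hs0 => ?_⟩
  by_contra! h
  exact hball (by simpa using h) ⟨hs, hs0⟩

lemma exists_pos_le_abs_sum_of_finite {F : Set ℝ} (hF : F.Finite) (ι : Type*) [Fintype ι] :
    ∃ m > 0, ∀ (q : ι → ℝ) (I : Finset ι), (∀ i ∈ I, q i ∈ F) →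
      ∑ i ∈ I, q i ≠ 0 → m ≤ |∑ i ∈ I, q i| := by
  classical
  have hsums : ((fun f : ι → ℝ => ∑ i, f i) '' Set.univ.pi fun _ => insert 0 F).Finite :=
    (Set.Finite.pi fun _ => hF.insert 0).image _
  obtain ⟨m, hm, hle⟩ := hsums.exists_pos_le_abs
  refine ⟨m, hm, fun q I hqF hne => hle _ ⟨fun i => if i ∈ I then q i else 0, ?_, ?_⟩ hne⟩
  · intro i _
    show (if i ∈ I then q i else 0) ∈ insert 0 F
    split_ifs with hi
    exacts [Set.mem_insert_of_mem _ (hqF i hi), Set.mem_insert _ _]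
  · simp [Finset.sum_ite_mem]

lemma exists_antitone_seq_of_forall_exists_le (R : ℝ → ℝ → Prop) {a : ℝ} (ha : 0 < a)
    (h : ∀ d > 0, ∃ d' > 0, d' ≤ d ∧ R d d') :
    ∃ δ : ℕ → ℝ, δ 0 = a ∧ (∀ n, 0 < δ n) ∧ Antitone δ ∧ ∀ n, R (δ n) (δ (n + 1)) := by
  choose! f hf0 hfle hfR using h
  have hpos : ∀ n, 0 < f^[n] a := fun n => by
    induction n with
    | zero => exact ha
    | succ n ih => rw [Function.iterate_succ_apply']; exact hf0 _ ih
  refine ⟨fun n => f^[n] a, rfl, hpos, antitone_nat_of_succ_le fun n => ?_, fun n => ?_⟩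
  · rw [Function.iterate_succ_apply']; exact hfle _ (hpos n)
  · show R (f^[n] a) (f^[n + 1] a)
    rw [Function.iterate_succ_apply']; exact hfR _ (hpos n)

lemma exists_antitone_seq_mul_le_abs_sum {S : Set ℝ} (hS : ∀ d > 0, {s ∈ S | d ≤ |s|}.Finite)
    (ι : Type*) [Fintype ι] {C : ℝ} (hC : 0 < C) :
    ∃ δ : ℕ → ℝ, δ 0 = 1 ∧ (∀ n, 0 < δ n) ∧ Antitone δ ∧
      ∀ n (q : ι → ℝ) (I : Finset ι), (∀ i ∈ I, q i ∈ S ∧ δ n ≤ |q i|) →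
        ∑ i ∈ I, q i ≠ 0 → C * δ (n + 1) ≤ |∑ i ∈ I, q i| := by
  refine exists_antitone_seq_of_forall_exists_le (fun d d' => ∀ (q : ι → ℝ) (I : Finset ι),
    (∀ i ∈ I, q i ∈ S ∧ d ≤ |q i|) → ∑ i ∈ I, q i ≠ 0 → C * d' ≤ |∑ i ∈ I, q i|)
    one_pos fun d hd => ?_
  obtain ⟨m, hm, hle⟩ := exists_pos_le_abs_sum_of_finite (hS d hd) ι
  refine ⟨min d (m / C), by positivity, min_le_left _ _, fun q I hqI hne => ?_⟩
  calc C * min d (m / C) ≤ C * (m / C) := by gcongr; exact min_le_right _ _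
    _ = m := by field_simp
    _ ≤ |∑ i ∈ I, q i| := hle q I hqI hne

lemma Antitone.exists_forall_notMem_Ico_succ {δ : ℕ → ℝ} (hδ : Antitone δ) {ι : Type*}
    [Fintype ι] (v : ι → ℝ) : ∃ j ≤ Fintype.card ι, ∀ i, v i ∉ Set.Ico (δ (j + 1)) (δ j) := by
  by_contra! h
  choose idx hmem using fun j : Fin (Fintype.card ι + 1) => (h j (Nat.lt_succ_iff.1 j.2))
  obtain ⟨a, b, hab, heq⟩ := Fintype.exists_ne_map_eq_of_card_lt idx (by simp)
  have hdisj := hδ.pairwise_disjoint_on_Ico_succ (Fin.val_injective.ne hab)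
  exact Set.disjoint_left.1 hdisj (hmem a) (heq ▸ hmem b)

theorem exists_pos_lt_abs_sum {S : Set ℝ} (hS : ∀ d > 0, {s ∈ S | d ≤ |s|}.Finite)
    (ι : Type*) [Fintype ι] :
    ∃ ε > 0, ∀ q : ι → ℝ, (∀ i, q i ∈ S) → (∃ i, 1 ≤ |q i|) →
      (∀ I : Finset ι, I.Nonempty → ∑ i ∈ I, q i ≠ 0) → ε < |∑ i, q i| := by
  classical
  set k := Fintype.card ι
  obtain ⟨δ, hδ0, hδpos, hδanti, hδsum⟩ := exists_antitone_seq_mul_le_abs_sum hS ι (C := k + 1) (by positivity)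
  refine ⟨δ (k + 1) / 2, by linarith [hδpos (k + 1)], fun q hqS ⟨i₀, hi₀⟩ hsub => ?_⟩
  obtain ⟨j, hjk, hgap⟩ := hδanti.exists_forall_notMem_Ico_succ fun i => |q i|
  set L := Finset.univ.filter fun i => δ j ≤ |q i|
  have hL : L.Nonempty := ⟨i₀, by simpa [L] using (hδanti j.zero_le).trans (hδ0 ▸ hi₀)⟩
  have hlarge : (k + 1) * δ (j + 1) ≤ |∑ i ∈ L, q i| :=
    hδsum j q L (fun i hi => ⟨hqS i, (Finset.mem_filter.1 hi).2⟩) (hsub L hL)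
  have hsmall : |∑ i ∈ Lᶜ, q i| ≤ k * δ (j + 1) := by
    calc |∑ i ∈ Lᶜ, q i| ≤ ∑ i ∈ Lᶜ, |q i| := Finset.abs_sum_le_sum_abs _ _
      _ ≤ Lᶜ.card • δ (j + 1) := Finset.sum_le_card_nsmul _ _ _ fun i hi => by
          have : |q i| < δ j := by simpa [L] using hi
          by_contra! h
          exact hgap i ⟨h.le, this⟩
      _ ≤ k * δ (j + 1) := by
          rw [nsmul_eq_mul]; gcongr; exacts [(hδpos _).le, Finset.card_le_univ _]
  calc δ (k + 1) / 2 < δ (j + 1) := by linarith [hδpos (k + 1), hδanti (by omega : j + 1 ≤ k + 1)]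
    _ ≤ |∑ i ∈ L, q i| - |∑ i ∈ Lᶜ, q i| := by linarith
    _ ≤ |∑ i ∈ L, q i + ∑ i ∈ Lᶜ, q i| := abs_sub_abs_le_abs_add _ _
    _ = |∑ i, q i| := by rw [Finset.sum_add_sum_compl]

lemma finite_setOf_le_abs_inv {X : Set ℝ} (hXc : IsClosed X) (hXd : DiscreteTopology X)
    {d : ℝ} (hd : 0 < d) : {y ∈ {y : ℝ | ∃ x ∈ X, y = 1 / x} | d ≤ |y|}.Finite := by
  refine ((Metric.finite_isBounded_inter_isClosed hXd.isDiscrete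
    (Metric.isBounded_closedBall (x := 0) (r := d⁻¹)) hXc).image fun x => 1 / x).subset ?_
  rintro _ ⟨⟨x, hx, rfl⟩, hdx⟩
  refine ⟨x, ⟨?_, hx⟩, rfl⟩
  rw [one_div, abs_inv] at hdx
  have hx0 : 0 < |x| := (hd.trans_le hdx) |> inv_pos.1
  simpa using (le_inv_comm₀ hd hx0).1 hdx

lemma finite_setOf_le_abs_union_neg {A : Set ℝ} {d : ℝ} (hA : {y ∈ A | d ≤ |y|}.Finite) :
    {y ∈ A ∪ -A | d ≤ |y|}.Finite := by
  refine (hA.union hA.neg).subset ?_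
  rintro y ⟨hy | hy, hdy⟩
  exacts [Or.inl ⟨hy, hdy⟩, Or.inr ⟨hy, by simpa using hdy⟩]

theorem subset_sums_bounded_away_from_zero_general (X : Set ℝ)
    (hXc : IsClosed X) (hXd : DiscreteTopology X) :
    ∀ (k : ℕ) (hk : 0 < k), ∃ ε : ℝ, 0 < ε ∧
      ∀ q : Fin k → ℝ,
        (∀ i, q i ∈ {y : ℝ | ∃ x ∈ X, y = 1 / x} ∪ -{y : ℝ | ∃ x ∈ X, y = 1 / x}) →
        |q ⟨0, hk⟩| = 1 →
        (∀ I : Finset (Fin k), I.Nonempty → ∑ i ∈ I, q i ≠ 0) →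
        ε < |∑ i, q i| := by
  intro k hk
  obtain ⟨ε, hε, hsum⟩ := exists_pos_lt_abs_sum
    (fun d hd => finite_setOf_le_abs_union_neg (finite_setOf_le_abs_inv hXc hXd hd)) (Fin k)
  exact ⟨ε, hε, fun q hq hq0 hsub => hsum q hq ⟨⟨0, hk⟩, hq0.ge⟩ hsub⟩

/-- Let `X ⊆ [1,∞)` be closed and discrete, `Q = {1/x : x ∈ X}`. For each
`k ≥ 1` there is `ε_k > 0` such that any sum `q_1 + ⋯ + q_k` with each `q_i ∈ ±Q`,
`|q_1| = 1`, and all nonempty subset sums nonzero, has absolute value `> ε_k`. -/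
theorem subset_sums_bounded_away_from_zero (X : Set ℝ) (hX1 : X ⊆ Set.Ici 1)
    (hXc : IsClosed X) (hXd : DiscreteTopology X) :
    ∀ (k : ℕ) (hk : 0 < k), ∃ ε : ℝ, 0 < ε ∧
      ∀ q : Fin k → ℝ,
        (∀ i, q i ∈ {y : ℝ | ∃ x ∈ X, y = 1 / x} ∪ -{y : ℝ | ∃ x ∈ X, y = 1 / x}) →
        |q ⟨0, hk⟩| = 1 →
        (∀ I : Finset (Fin k), I.Nonempty → ∑ i ∈ I, q i ≠ 0) →
        ε < |∑ i, q i| :=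
  subset_sums_bounded_away_from_zero_general X hXc hXd
end

section
/- If A ⊆ ℤ⁺ is geometrically sparse, then A is sufficiently sparse; that is, δ̲(Σ_n(±A) ∩ ℕ) = 0 for every n ≥ 1. -/
open Filter Pointwise

open Topology



section NsmulFinset
variable {M : Type*} [AddCommMonoid M] [DecidableEq M] {T : Finset M}

lemma zero_mem_nsmulF (h0 : (0:M) ∈ T) : ∀ n : ℕ, (0:M) ∈ n • T
  | 0 => by simp
  | (n+1) => by
      rw [succ_nsmul]
      simpa using Finset.add_mem_add (zero_mem_nsmulF h0 n) h0

lemma nsmulF_mono (h0 : (0:M) ∈ T) {m n : ℕ} (h : m ≤ n) : m • T ⊆ n • T := by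
  induction n, h using Nat.le_induction with
  | base => exact subset_rfl
  | succ n hmn ih =>
      rw [succ_nsmul]
      intro x hx
      simpa using Finset.add_mem_add (ih hx) h0

lemma sum_mem_nsmulF {ι : Type*} (h0 : (0:M) ∈ T) (s : Finset ι) (t : ι → M)
    (ht : ∀ i ∈ s, t i ∈ T) : ∑ i ∈ s, t i ∈ s.card • T := by
  induction s using Finset.cons_induction with
  | empty => simp
  | cons i s hi ih =>
      rw [Finset.sum_cons, Finset.card_cons, succ_nsmul, add_comm ((s.card) • T) T]
      exact Finset.add_mem_add (ht i (Finset.mem_cons_self i s))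
        (ih fun j hj => ht j (Finset.mem_cons_of_mem hj))

lemma sum_mem_nsmulF' {ι : Type*} (h0 : (0:M) ∈ T) (s : Finset ι) (t : ι → M)
    {n : ℕ} (hs : s.card ≤ n) (ht : ∀ i ∈ s, t i ∈ T) : ∑ i ∈ s, t i ∈ n • T :=
  nsmulF_mono h0 hs (sum_mem_nsmulF h0 s t ht)

end NsmulFinset

lemma finite_inter_Icc {R : Set ℝ} (hcl : IsClosed R) (hd : DiscreteTopology R) (a b : ℝ) :
    (R ∩ Set.Icc a b).Finite := by
  have hc : IsCompact (R ∩ Set.Icc a b) :=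
    (isCompact_Icc (a := a) (b := b)).of_isClosed_subset (hcl.inter isClosed_Icc)
      Set.inter_subset_right
  exact hc.finite (isDiscrete_iff_discreteTopology.mpr (DiscreteTopology.of_subset hd Set.inter_subset_left))


noncomputable def etaOf (E : Finset ℝ) : ℝ :=
  if h : (E.filter (fun x => x ≠ 0)).Nonempty then (E.filter (fun x => x ≠ 0)).inf' h (fun x => |x|)
  else 1

lemma etaOf_pos (E : Finset ℝ) : 0 < etaOf E := by
  unfold etaOf
  split
  · rename_i h
    rw [Finset.lt_inf'_iff]
    intro b hb
    exact abs_pos.mpr (Finset.mem_filter.mp hb).2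
  · exact one_pos

lemma etaOf_le (E : Finset ℝ) {x : ℝ} (hx : x ∈ E) (h0 : x ≠ 0) : etaOf E ≤ |x| := by
  have hmem : x ∈ E.filter (fun x => x ≠ 0) := Finset.mem_filter.mpr ⟨hx, h0⟩
  unfold etaOf
  rw [dif_pos ⟨x, hmem⟩]
  exact Finset.inf'_le _ hmem

/-- the symmetrized finite set `±F ∪ {0}` -/
noncomputable def symmF (F : Finset ℝ) : Finset ℝ := insert (0:ℝ) (F ∪ -F)

/-- the finite set of possible block-combination values at truncation level `t` -/
noncomputable def FSv (Rf : ℝ → Finset ℝ) (n : ℕ) (t : ℝ) : Finset ℝ := n • symmF (Rf t)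

noncomputable def etav (Rf : ℝ → Finset ℝ) (n : ℕ) (t : ℝ) : ℝ := etaOf (FSv Rf n t)

lemma etav_pos (Rf : ℝ → Finset ℝ) (n : ℕ) (t : ℝ) : 0 < etav Rf n t := etaOf_pos _

/-- the chain of thresholds -/
noncomputable def Tch (Rf : ℝ → Finset ℝ) (n : ℕ) : ℕ → ℝ
  | 0 => 1
  | (k+1) => Tch Rf n k * (2 + 4 * n / etav Rf n (Tch Rf n k))

lemma Tch_one_le (Rf : ℝ → Finset ℝ) (n : ℕ) : ∀ k, 1 ≤ Tch Rf n k
  | 0 => le_refl 1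
  | (k+1) => by
      have h1 := Tch_one_le Rf n k
      have h2 : 0 ≤ 4 * (n:ℝ) / etav Rf n (Tch Rf n k) :=
        div_nonneg (by positivity) (etav_pos Rf n _).le
      calc (1:ℝ) ≤ 1 * 2 := by norm_num
      _ ≤ Tch Rf n k * (2 + 4 * n / etav Rf n (Tch Rf n k)) := by nlinarith
      _ = Tch Rf n (k+1) := rfl

lemma Tch_le_succ (Rf : ℝ → Finset ℝ) (n : ℕ) (k : ℕ) : Tch Rf n k ≤ Tch Rf n (k+1) := by
  have h1 := Tch_one_le Rf n k
  have h2 : 0 ≤ 4 * (n:ℝ) / etav Rf n (Tch Rf n k) :=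
    div_nonneg (by positivity) (etav_pos Rf n _).le
  calc Tch Rf n k = Tch Rf n k * 1 := (mul_one _).symm
  _ ≤ Tch Rf n k * (2 + 4 * n / etav Rf n (Tch Rf n k)) := by nlinarith
  _ = Tch Rf n (k+1) := rfl

set_option maxHeartbeats 1600000 in
lemma claim_real (n : ℕ) (V R : Set ℝ) (hVpos : ∀ v ∈ V, 0 < v)
    (hR : ∀ v ∈ V, ∀ w ∈ V, w ≤ v → v / w ∈ R)
    (hcl : IsClosed R) (hdis : DiscreteTopology R) :
    ∃ D : ℝ, 1 ≤ D ∧ ∀ (ι : Type) [DecidableEq ι] (s : Finset ι) (v : ι → ℝ) (ε : ι → ℤ),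
      s.card ≤ n → (∀ i ∈ s, v i ∈ V) → (∀ i ∈ s, ε i = 1 ∨ ε i = -1) →
      ∃ S, S ⊆ s ∧ (∑ i ∈ S, (ε i : ℝ) * v i) = 0 ∧
        ∀ i ∈ s \ S, v i ≤ D * (|∑ i ∈ s, (ε i : ℝ) * v i| + 1) := by
  classical
  set Rf : ℝ → Finset ℝ := fun t => (finite_inter_Icc hcl hdis 1 t).toFinset with hRfdef
  refine ⟨1 + ∑ j ∈ Finset.Icc 1 n, 2 * Tch Rf n j / etav Rf n (Tch Rf n j), ?_, ?_⟩
  case _ =>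
    refine le_add_of_nonneg_right (Finset.sum_nonneg fun j _ => div_nonneg ?_ (etav_pos Rf n _).le)
    nlinarith [Tch_one_le Rf n j]
  set D : ℝ := 1 + ∑ j ∈ Finset.Icc 1 n, 2 * Tch Rf n j / etav Rf n (Tch Rf n j) with hDdef
  have hterm_nonneg : ∀ j ∈ Finset.Icc 1 n, 0 ≤ 2 * Tch Rf n j / etav Rf n (Tch Rf n j) :=
    fun j _ => div_nonneg (by nlinarith [Tch_one_le Rf n j]) (etav_pos Rf n _).le
  have hD1 : 1 ≤ D := le_add_of_nonneg_right (Finset.sum_nonneg hterm_nonneg)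
  have hDj : ∀ j ∈ Finset.Icc 1 n, 2 * Tch Rf n j / etav Rf n (Tch Rf n j) ≤ D := by
    intro j hj
    have := Finset.single_le_sum hterm_nonneg hj
    rw [hDdef]; linarith
  intro ι _inst s v ε
  induction s using Finset.strongInductionOn with
  | _ s ih =>
  intro hcard hv hε
  rcases s.eq_empty_or_nonempty with rfl | hne
  · exact ⟨∅, Finset.empty_subset _, by simp, by simp⟩
  obtain ⟨i₁, hi₁s, hmax⟩ := s.exists_max_image v hne
  have hn1 : 1 ≤ n := le_trans (Finset.card_pos.mpr hne) hcard
  have hvpos : ∀ i ∈ s, 0 < v i := fun i hi => hVpos _ (hv i hi)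
  set sj : ℕ → Finset ι := fun j => s.filter (fun i => v i₁ ≤ Tch Rf n j * v i) with hsjdef
  have hsubs : ∀ j, sj j ⊆ s := fun j => Finset.filter_subset _ _
  have hmono : ∀ j, sj j ⊆ sj (j+1) := by
    intro j i hi
    obtain ⟨his, hcond⟩ := Finset.mem_filter.mp hi
    refine Finset.mem_filter.mpr ⟨his, le_trans hcond ?_⟩
    exact mul_le_mul_of_nonneg_right (Tch_le_succ Rf n j) (hvpos i his).le
  have hi₁mem : ∀ j, i₁ ∈ sj j := by
    intro j
    refine Finset.mem_filter.mpr ⟨hi₁s, ?_⟩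
    nlinarith [Tch_one_le Rf n j, hvpos i₁ hi₁s]
  have hex : ∃ j, 1 ≤ j ∧ j ≤ n ∧ sj j = sj (j+1) := by
    by_contra hcon
    push_neg at hcon
    have key : ∀ j, 1 ≤ j → j ≤ n + 1 → j ≤ (sj j).card := by
      intro j hj
      induction j, hj using Nat.le_induction with
      | base => intro _; exact Finset.card_pos.mpr ⟨i₁, hi₁mem 1⟩
      | succ j hj ihj =>
          intro hjn
          have hne' : sj j ≠ sj (j+1) := hcon j hj (by omega)
          have hlt : (sj j).card < (sj (j+1)).card :=
            Finset.card_lt_card (ssubset_of_subset_of_ne (hmono j) hne')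
          have := ihj (by omega)
          omega
    have h1 := key (n+1) (by omega) le_rfl
    have h2 : (sj (n+1)).card ≤ s.card := Finset.card_le_card (hsubs _)
    omega
  obtain ⟨j, hj1, hjn, hjeq⟩ := hex
  have hBs : sj j ⊆ s := hsubs j
  have hi₁B : i₁ ∈ sj j := hi₁mem j
  obtain ⟨iB, hiBB, hmin⟩ := (sj j).exists_min_image v ⟨i₁, hi₁B⟩
  have hiBs : iB ∈ s := hBs hiBB
  have hviB : 0 < v iB := hvpos iB hiBs
  have hTj1 : 1 ≤ Tch Rf n j := Tch_one_le Rf n j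
  have hTjpos : 0 < Tch Rf n j := lt_of_lt_of_le one_pos hTj1
  have hTj1pos : 0 < Tch Rf n (j+1) := lt_of_lt_of_le one_pos (Tch_one_le Rf n (j+1))
  have hiBcond : v i₁ ≤ Tch Rf n j * v iB := (Finset.mem_filter.mp hiBB).2
  have hrmem : ∀ i ∈ sj j, v i / v iB ∈ Rf (Tch Rf n j) := by
    intro i hiB
    have his := hBs hiB
    rw [hRfdef]
    rw [Set.Finite.mem_toFinset]
    refine ⟨hR _ (hv i his) _ (hv iB hiBs) (hmin i hiB), ?_, ?_⟩
    · rw [le_div_iff₀ hviB]; simpa using hmin i hiB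
    · rw [div_le_iff₀ hviB]
      exact le_trans (hmax i his) hiBcond
  have hterm : ∀ i ∈ sj j, (ε i : ℝ) * (v i / v iB) ∈ symmF (Rf (Tch Rf n j)) := by
    intro i hiB
    rcases hε i (hBs hiB) with h1 | h1 <;> rw [h1] <;> push_cast
    · rw [one_mul]
      exact Finset.mem_insert_of_mem (Finset.mem_union_left _ (hrmem i hiB))
    · rw [neg_one_mul]
      exact Finset.mem_insert_of_mem (Finset.mem_union_right _ (Finset.neg_mem_neg (hrmem i hiB)))
  have hwmem : (∑ i ∈ sj j, (ε i : ℝ) * (v i / v iB)) ∈ FSv Rf n (Tch Rf n j) :=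
    sum_mem_nsmulF' (Finset.mem_insert_self 0 _) _ _
      (le_trans (Finset.card_le_card hBs) hcard) hterm
  have hsplit : ∑ i ∈ sj j, (ε i:ℝ) * v i = v iB * ∑ i ∈ sj j, (ε i : ℝ) * (v i / v iB) := by
    rw [Finset.mul_sum]
    refine Finset.sum_congr rfl fun i hi => ?_
    field_simp
  rcases eq_or_ne (∑ i ∈ sj j, (ε i : ℝ) * (v i / v iB)) 0 with hw0 | hw0
  · -- top block cancels exactly; recurse on the rest
    have hBsum0 : ∑ i ∈ sj j, (ε i:ℝ) * v i = 0 := by rw [hsplit, hw0, mul_zero]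
    have hssub : s \ sj j ⊂ s := by
      refine Finset.sdiff_ssubset hBs ⟨i₁, hi₁B⟩
    obtain ⟨S', hS'sub, hS'sum, hS'bd⟩ := ih (s \ sj j) hssub
      (le_trans (Finset.card_le_card (Finset.sdiff_subset)) hcard)
      (fun i hi => hv i (Finset.mem_sdiff.mp hi).1)
      (fun i hi => hε i (Finset.mem_sdiff.mp hi).1)
    have hdisj : Disjoint (sj j) S' :=
      Finset.disjoint_left.mpr fun a haB haS' => (Finset.mem_sdiff.mp (hS'sub haS')).2 haB
    refine ⟨sj j ∪ S', Finset.union_subset hBs (hS'sub.trans Finset.sdiff_subset), ?_, ?_⟩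
    · rw [Finset.sum_union hdisj, hBsum0, hS'sum, add_zero]
    · intro i hi
      have hsum_eq : ∑ i ∈ s \ sj j, (ε i:ℝ) * v i = ∑ i ∈ s, (ε i:ℝ) * v i := by
        rw [Finset.sum_sdiff_eq_sub hBs, hBsum0, sub_zero]
      have hi' : i ∈ (s \ sj j) \ S' := by
        simp only [Finset.mem_sdiff, Finset.mem_union] at hi ⊢
        tauto
      have := hS'bd i hi'
      rwa [hsum_eq] at this
  · -- main estimate: the total sum is large
    have hηle : etav Rf n (Tch Rf n j) ≤ |∑ i ∈ sj j, (ε i : ℝ) * (v i / v iB)| :=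
      etaOf_le _ hwmem hw0
    have hηpos : 0 < etav Rf n (Tch Rf n j) := etav_pos Rf n _
    have hv1pos : 0 < v i₁ := hvpos i₁ hi₁s
    have hblock : v iB * etav Rf n (Tch Rf n j) ≤ |∑ i ∈ sj j, (ε i:ℝ) * v i| := by
      rw [hsplit, abs_mul, abs_of_pos hviB]
      exact mul_le_mul_of_nonneg_left hηle hviB.le
    have hrest : ∀ i ∈ s \ sj j, v i ≤ v i₁ / Tch Rf n (j+1) := by
      intro i hi
      obtain ⟨his, hiB⟩ := Finset.mem_sdiff.mp hi
      have hnot : i ∉ sj (j+1) := by rw [← hjeq]; exact hiB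
      have hcond : ¬ (v i₁ ≤ Tch Rf n (j+1) * v i) := fun hc => hnot (Finset.mem_filter.mpr ⟨his, hc⟩)
      push_neg at hcond
      rw [le_div_iff₀ hTj1pos]
      nlinarith [hcond]
    have hrestsum : |∑ i ∈ s \ sj j, (ε i:ℝ) * v i| ≤ n * (v i₁ / Tch Rf n (j+1)) := by
      calc |∑ i ∈ s \ sj j, (ε i:ℝ) * v i| ≤ ∑ i ∈ s \ sj j, |(ε i:ℝ) * v i| :=
            Finset.abs_sum_le_sum_abs _ _
      _ ≤ ∑ _i ∈ s \ sj j, (v i₁ / Tch Rf n (j+1)) := by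
            refine Finset.sum_le_sum fun i hi => ?_
            have his := (Finset.mem_sdiff.mp hi).1
            have hε1 : |(ε i:ℝ)| = 1 := by rcases hε i his with h|h <;> simp [h]
            rw [abs_mul, hε1, one_mul, abs_of_pos (hvpos i his)]
            exact hrest i hi
      _ = ((s \ sj j).card : ℝ) * (v i₁ / Tch Rf n (j+1)) := by
            rw [Finset.sum_const, nsmul_eq_mul]
      _ ≤ n * (v i₁ / Tch Rf n (j+1)) := by
            have h1 : ((s \ sj j).card : ℝ) ≤ n := by
              exact_mod_cast le_trans (Finset.card_le_card Finset.sdiff_subset) hcard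
            have h2 : 0 ≤ v i₁ / Tch Rf n (j+1) := le_of_lt (div_pos hv1pos hTj1pos)
            exact mul_le_mul_of_nonneg_right h1 h2
    have hTsucc : Tch Rf n j * (4 * n / etav Rf n (Tch Rf n j)) ≤ Tch Rf n (j+1) := by
      have hdef : Tch Rf n (j+1) = Tch Rf n j * (2 + 4 * n / etav Rf n (Tch Rf n j)) := rfl
      rw [hdef]
      nlinarith [hTjpos]
    -- rest is at most (η * v i₁) / (4 * T j)
    have hrest3 : 4 * Tch Rf n j * |∑ i ∈ s \ sj j, (ε i:ℝ) * v i| ≤ v i₁ * etav Rf n (Tch Rf n j) := by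
      have hβ : (v i₁ / Tch Rf n (j+1)) * Tch Rf n (j+1) = v i₁ :=
        div_mul_cancel₀ _ (ne_of_gt hTj1pos)
      have hβ0 : 0 ≤ v i₁ / Tch Rf n (j+1) := le_of_lt (div_pos hv1pos hTj1pos)
      have h4 : Tch Rf n j * (4 * n / etav Rf n (Tch Rf n j)) * (v i₁ / Tch Rf n (j+1))
          ≤ Tch Rf n (j+1) * (v i₁ / Tch Rf n (j+1)) := mul_le_mul_of_nonneg_right hTsucc hβ0
      have h5 : Tch Rf n j * (4 * n / etav Rf n (Tch Rf n j)) * (v i₁ / Tch Rf n (j+1))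
          = 4 * Tch Rf n j * (n * (v i₁ / Tch Rf n (j+1))) / etav Rf n (Tch Rf n j) := by ring
      have h6 : Tch Rf n (j+1) * (v i₁ / Tch Rf n (j+1)) = v i₁ := by
        rw [mul_comm]; exact hβ
      rw [h5, h6] at h4
      rw [div_le_iff₀ hηpos] at h4
      have h7 : 4 * Tch Rf n j * |∑ i ∈ s \ sj j, (ε i:ℝ) * v i|
          ≤ 4 * Tch Rf n j * (n * (v i₁ / Tch Rf n (j+1))) := by
        refine mul_le_mul_of_nonneg_left hrestsum (by positivity)
      nlinarith [h4, h7]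
    have hsum_s : ∑ i ∈ s, (ε i:ℝ) * v i
        = ∑ i ∈ s \ sj j, (ε i:ℝ) * v i + ∑ i ∈ sj j, (ε i:ℝ) * v i :=
      (Finset.sum_sdiff hBs).symm
    have htri : |∑ i ∈ sj j, (ε i:ℝ) * v i|
        ≤ |∑ i ∈ s, (ε i:ℝ) * v i| + |∑ i ∈ s \ sj j, (ε i:ℝ) * v i| := by
      have : ∑ i ∈ sj j, (ε i:ℝ) * v i
          = ∑ i ∈ s, (ε i:ℝ) * v i - ∑ i ∈ s \ sj j, (ε i:ℝ) * v i := by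
        rw [hsum_s]; ring
      rw [this]
      exact abs_sub _ _
    -- conclude : v i₁ * η ≤ 2 * T j * |∑_s|
    have hfinal : v i₁ * etav Rf n (Tch Rf n j) ≤ 2 * Tch Rf n j * |∑ i ∈ s, (ε i:ℝ) * v i| := by
      have hb2 : v i₁ * etav Rf n (Tch Rf n j) ≤ Tch Rf n j * |∑ i ∈ sj j, (ε i:ℝ) * v i| := by
        calc v i₁ * etav Rf n (Tch Rf n j) ≤ (Tch Rf n j * v iB) * etav Rf n (Tch Rf n j) :=
              mul_le_mul_of_nonneg_right hiBcond hηpos.le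
        _ = Tch Rf n j * (v iB * etav Rf n (Tch Rf n j)) := by ring
        _ ≤ Tch Rf n j * |∑ i ∈ sj j, (ε i:ℝ) * v i| :=
              mul_le_mul_of_nonneg_left hblock hTjpos.le
      have hb3 : Tch Rf n j * |∑ i ∈ sj j, (ε i:ℝ) * v i|
          ≤ Tch Rf n j * |∑ i ∈ s, (ε i:ℝ) * v i| + Tch Rf n j * |∑ i ∈ s \ sj j, (ε i:ℝ) * v i| := by
        rw [← mul_add]
        exact mul_le_mul_of_nonneg_left htri hTjpos.le
      nlinarith [hrest3, hb2, hb3]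
    refine ⟨∅, Finset.empty_subset _, by simp, ?_⟩
    intro i hi
    rw [Finset.sdiff_empty] at hi
    have hvle := hmax i hi
    have hDj' : 2 * Tch Rf n j / etav Rf n (Tch Rf n j) ≤ D := hDj j (Finset.mem_Icc.mpr ⟨hj1, hjn⟩)
    have h2Tj : 2 * Tch Rf n j ≤ D * etav Rf n (Tch Rf n j) := by
      rw [div_le_iff₀ hηpos] at hDj'
      linarith
    have habs : 0 ≤ |∑ i ∈ s, (ε i:ℝ) * v i| := abs_nonneg _
    have hv1le : v i₁ ≤ D * |∑ i ∈ s, (ε i:ℝ) * v i| := by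
      refine le_of_mul_le_mul_right ?_ hηpos
      nlinarith [hfinal, mul_le_mul_of_nonneg_right h2Tj habs]
    nlinarith [hvle, hv1le, hD1, habs]


lemma claim_int (A : Set ℤ) (f : ℤ → ℝ) (C : ℝ) (n : ℕ) (hn : 1 ≤ n)
    (hApos : ∀ x ∈ A, 0 < x) (hf : ∀ a ∈ A, 0 < f a)
    (hcl : IsClosed {x : ℝ | ∃ s ∈ f '' A, ∃ t ∈ f '' A, t ≤ s ∧ x = s / t})
    (hdis : DiscreteTopology {x : ℝ | ∃ s ∈ f '' A, ∃ t ∈ f '' A, t ≤ s ∧ x = s / t})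
    (hC : ∀ a ∈ A, |(a : ℝ) - f a| ≤ C) (hC1 : 1 ≤ C) :
    ∃ D₀ : ℕ, 1 ≤ D₀ ∧ ∀ (k : ℕ), k ≤ n → ∀ (g : Fin k → ℤ), (∀ i, g i ∈ pmSet A) →
      ∃ S : Finset (Fin k), |∑ i ∈ S, g i| ≤ (D₀:ℤ) ∧
        ∀ i ∉ S, |g i| ≤ (D₀:ℤ) * (|∑ i, g i| + 1) := by
  classical
  obtain ⟨D, hD1, hclaim⟩ := claim_real n (f '' A)
    {x : ℝ | ∃ s ∈ f '' A, ∃ t ∈ f '' A, t ≤ s ∧ x = s / t}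
    (by rintro v ⟨a, ha, rfl⟩; exact hf a ha)
    (fun v hv w hw hwv => ⟨v, hv, w, hw, hwv, rfl⟩) hcl hdis
  have hn0 : (0:ℝ) ≤ n := Nat.cast_nonneg n
  have hn1 : (1:ℝ) ≤ n := by exact_mod_cast hn
  have hC0 : (0:ℝ) ≤ C := le_trans zero_le_one hC1
  have hD0 : (0:ℝ) ≤ D := le_trans zero_le_one hD1
  have hDC1 : (1:ℝ) ≤ D * (n * C + 1) + C := by
    nlinarith [mul_nonneg (mul_nonneg (le_trans zero_le_one hD1) (Nat.cast_nonneg n)) (le_trans zero_le_one hC1)]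
  refine ⟨⌈D * (n * C + 1) + C⌉₊, Nat.one_le_ceil_iff.mpr (by nlinarith [hDC1]), ?_⟩
  intro k hk g hg
  set v : Fin k → ℝ := fun i => f (|g i|) with hvdef
  set ε : Fin k → ℤ := fun i => if 0 ≤ g i then 1 else -1 with hεdef
  have hgA : ∀ i, |g i| ∈ A := fun i => by simpa [pmSet] using hg i
  have hvpos : ∀ i, 0 < v i := fun i => hf _ (hgA i)
  have happrox : ∀ i : Fin k, |(g i : ℝ) - (ε i : ℝ) * v i| ≤ C := by
    intro i
    have h1 := hC _ (hgA i)
    rcases le_or_gt 0 (g i) with h | h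
    · have hε1 : ε i = 1 := if_pos h
      rw [hε1]
      have hcast : ((|g i| : ℤ) : ℝ) = (g i : ℝ) := by
        rw [abs_of_nonneg h]
      show |(g i:ℝ) - ((1:ℤ):ℝ) * f (|g i|)| ≤ C
      rw [show ((g i:ℝ) - ((1:ℤ):ℝ) * f (|g i|)) = ((|g i|:ℤ):ℝ) - f (|g i|) by rw [hcast]; push_cast; ring]
      exact h1
    · have hε1 : ε i = -1 := if_neg (not_le.mpr h)
      rw [hε1]
      have hcast : ((|g i| : ℤ) : ℝ) = -(g i : ℝ) := by
        rw [abs_of_neg h]; push_cast; ring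
      show |(g i:ℝ) - ((-1:ℤ):ℝ) * f (|g i|)| ≤ C
      rw [show ((g i:ℝ) - ((-1:ℤ):ℝ) * f (|g i|)) = -(((|g i|:ℤ):ℝ) - f (|g i|)) by rw [hcast]; push_cast; ring,
        abs_neg]
      exact h1
  obtain ⟨S, hSsub, hSsum, hSbd⟩ := hclaim (Fin k) Finset.univ v ε
    (by simpa using hk) (fun i _ => ⟨|g i|, hgA i, rfl⟩)
    (fun i _ => by rcases le_or_gt 0 (g i) with h | h
                   · exact Or.inl (if_pos h)
                   · exact Or.inr (if_neg (not_le.mpr h)))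
  -- (a) the cancelled part is small
  have hSsmall : |(∑ i ∈ S, g i : ℤ)| ≤ (⌈D * (n * C + 1) + C⌉₊ : ℤ) := by
    have h1 : ((∑ i ∈ S, g i : ℤ) : ℝ) = ∑ i ∈ S, ((g i : ℝ) - (ε i : ℝ) * v i) := by
      rw [Finset.sum_sub_distrib, hSsum, sub_zero]
      push_cast
      rfl
    have h2 : |((∑ i ∈ S, g i : ℤ) : ℝ)| ≤ n * C := by
      rw [h1]
      calc |∑ i ∈ S, ((g i : ℝ) - (ε i : ℝ) * v i)| ≤ ∑ i ∈ S, |(g i : ℝ) - (ε i : ℝ) * v i| :=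
            Finset.abs_sum_le_sum_abs _ _
      _ ≤ ∑ _i ∈ S, C := Finset.sum_le_sum (fun i _ => happrox i)
      _ = (S.card : ℝ) * C := by rw [Finset.sum_const, nsmul_eq_mul]
      _ ≤ n * C := by
            have : (S.card : ℝ) ≤ n := by
              exact_mod_cast le_trans (Finset.card_le_card hSsub) (by simpa using hk)
            nlinarith
    have h3 : (n : ℝ) * C ≤ (⌈D * (n * C + 1) + C⌉₊ : ℝ) := by
      refine le_trans ?_ (Nat.le_ceil _)
      nlinarith
    have h4 : |((∑ i ∈ S, g i : ℤ) : ℝ)| ≤ (⌈D * (n * C + 1) + C⌉₊ : ℝ) := le_trans h2 h3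
    exact_mod_cast (by push_cast at h4 ⊢; exact h4 : |((∑ i ∈ S, g i : ℤ) : ℝ)| ≤ ((⌈D * (n * C + 1) + C⌉₊:ℤ) : ℝ))
  refine ⟨S, hSsmall, ?_⟩
  -- (b) the other generators are small
  intro i hiS
  have hi' : i ∈ Finset.univ \ S := Finset.mem_sdiff.mpr ⟨Finset.mem_univ i, hiS⟩
  have hb := hSbd i hi'
  set Xr : ℝ := |∑ i, (ε i : ℝ) * v i| with hXrdef
  set X : ℝ := |((∑ i, g i : ℤ) : ℝ)| with hXdef
  have hXX : Xr ≤ X + n * C := by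
    have h1 : (∑ i, (ε i:ℝ) * v i) = ((∑ i, g i : ℤ):ℝ) - ∑ i, ((g i:ℝ) - (ε i:ℝ) * v i) := by
      push_cast
      rw [← Finset.sum_sub_distrib]
      simp
    have h2 : |∑ i, ((g i:ℝ) - (ε i:ℝ) * v i)| ≤ n * C := by
      calc |∑ i, ((g i : ℝ) - (ε i : ℝ) * v i)| ≤ ∑ i, |(g i : ℝ) - (ε i : ℝ) * v i| :=
            Finset.abs_sum_le_sum_abs _ _
      _ ≤ ∑ _i : Fin k, C := Finset.sum_le_sum (fun i _ => happrox i)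
      _ = (k : ℝ) * C := by rw [Finset.sum_const, nsmul_eq_mul, Finset.card_univ, Fintype.card_fin]
      _ ≤ n * C := by
            have : (k : ℝ) ≤ n := by exact_mod_cast hk
            nlinarith
    rw [hXrdef, h1]
    calc |((∑ i, g i : ℤ):ℝ) - ∑ i, ((g i:ℝ) - (ε i:ℝ) * v i)|
        ≤ |((∑ i, g i : ℤ):ℝ)| + |∑ i, ((g i:ℝ) - (ε i:ℝ) * v i)| := abs_sub _ _
    _ ≤ X + n * C := by rw [hXdef]; linarith
  have hgi : (|g i| : ℝ) ≤ v i + C := by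
    have h1 := happrox i
    have h2 : |(ε i : ℝ)| = 1 := by
      rcases le_or_gt 0 (g i) with h | h
      · have hε1 : ε i = 1 := if_pos h
        rw [hε1]; norm_num
      · have hε1 : ε i = -1 := if_neg (not_le.mpr h)
        rw [hε1]; norm_num
    have h3 : |(g i:ℝ)| ≤ |(ε i:ℝ) * v i| + C := by
      have heq : (g i:ℝ) = ((g i:ℝ) - (ε i:ℝ) * v i) + (ε i:ℝ) * v i := by ring
      calc |(g i:ℝ)| = |((g i:ℝ) - (ε i:ℝ) * v i) + (ε i:ℝ) * v i| := by rw [← heq]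
      _ ≤ |(g i:ℝ) - (ε i:ℝ) * v i| + |(ε i:ℝ) * v i| := abs_add_le _ _
      _ ≤ |(ε i:ℝ) * v i| + C := by linarith [happrox i]
    rw [abs_mul, h2, one_mul, abs_of_pos (hvpos i)] at h3
    push_cast
    exact h3
  have hXnn : 0 ≤ X := abs_nonneg _
  have hkey : (|g i| : ℝ) ≤ (D * (n * C + 1) + C) * (X + 1) := by
    have h5 : v i ≤ D * (Xr + 1) := hb
    have h6 : v i ≤ D * (X + n * C + 1) := by
      nlinarith [hXX, h5, mul_le_mul_of_nonneg_left hXX hD0]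
    nlinarith [hgi, h6, hXnn, mul_nonneg hC0 hXnn,
      mul_nonneg (mul_nonneg (mul_nonneg hD0 hn0) hC0) hXnn]
  have hceil : (D * (n * C + 1) + C) ≤ (⌈D * (n * C + 1) + C⌉₊ : ℝ) := Nat.le_ceil _
  have hfin : (|g i| : ℝ) ≤ ((⌈D * (n * C + 1) + C⌉₊ : ℝ)) * (X + 1) :=
    le_trans hkey (mul_le_mul_of_nonneg_right hceil (by linarith))
  have hXeq : X = ((|∑ i, g i| : ℤ) : ℝ) := by
    rw [hXdef, Int.cast_abs]
  rw [hXeq] at hfin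
  exact_mod_cast hfin

set_option maxHeartbeats 1600000 in
lemma countA_le (A : Set ℤ) (f : ℤ → ℝ) (C : ℝ) (hApos : ∀ x ∈ A, 0 < x)
    (hf : ∀ a ∈ A, 0 < f a)
    (hcl : IsClosed {x : ℝ | ∃ s ∈ f '' A, ∃ t ∈ f '' A, t ≤ s ∧ x = s / t})
    (hdis : DiscreteTopology {x : ℝ | ∃ s ∈ f '' A, ∃ t ∈ f '' A, t ≤ s ∧ x = s / t})
    (hC : ∀ a ∈ A, |(a : ℝ) - f a| ≤ C) (hC1 : 1 ≤ C) :
    ∃ c : ℝ, 1 ≤ c ∧ ∀ X : ℤ, 1 ≤ X → ((A ∩ Set.Icc 1 X).ncard : ℝ) ≤ c * (1 + Real.log X) := by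
  classical
  have hC0 : (0:ℝ) ≤ C := le_trans zero_le_one hC1
  -- the minimum value of f on A
  set K₀ : ℤ := ⌈2*C⌉ + 1 with hK₀def
  have hBfin : (A ∩ Set.Icc 1 K₀).Finite := (Set.finite_Icc 1 K₀).subset Set.inter_subset_right
  set μ : ℝ := if h : hBfin.toFinset.Nonempty then hBfin.toFinset.inf' h f else 1 with hμdef
  have hμpos : 0 < μ := by
    rw [hμdef]
    split
    · rename_i h
      rw [Finset.lt_inf'_iff]
      intro a ha
      rw [Set.Finite.mem_toFinset] at ha
      exact hf a ha.1
    · exact one_pos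
  set vmin : ℝ := min μ 1 with hvmindef
  have hvminpos : 0 < vmin := lt_min hμpos one_pos
  have hvmin1 : vmin ≤ 1 := min_le_right _ _
  have hvminle : ∀ a ∈ A, vmin ≤ f a := by
    intro a ha
    rcases le_or_gt a K₀ with h | h
    · have haB : a ∈ hBfin.toFinset := by
        rw [Set.Finite.mem_toFinset]
        exact ⟨ha, hApos a ha, h⟩
      have hμle : μ ≤ f a := by
        rw [hμdef, dif_pos ⟨a, haB⟩]
        exact Finset.inf'_le _ haB
      exact le_trans (min_le_left _ _) hμle
    · have h2 : (2*C : ℝ) + 1 ≤ (a:ℝ) := by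
        have ha2 : ((K₀:ℤ) : ℝ) + 1 ≤ (a : ℝ) := by exact_mod_cast h
        have hKr : (K₀ : ℝ) = ((⌈2*C⌉:ℤ):ℝ) + 1 := by rw [hK₀def]; push_cast; ring
        have hce : (2*C:ℝ) ≤ ((⌈2*C⌉:ℤ):ℝ) := Int.le_ceil (2*C)
        rw [hKr] at ha2
        linarith
      have h4 : (a:ℝ) - C ≤ f a := by
        have := abs_le.mp (hC a ha)
        linarith [this.2]
      refine le_trans hvmin1 ?_
      linarith
  -- the minimal ratio gap ρ
  set Ffin : Finset ℝ := ((finite_inter_Icc hcl hdis 1 2).toFinset).filter (fun x => 1 < x)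
    with hFdef
  set ρ : ℝ := if h : Ffin.Nonempty then Ffin.min' h else 2 with hρdef
  have hFmem : ∀ x ∈ Ffin, 1 < x ∧ x ≤ 2 := by
    intro x hx
    rw [hFdef, Finset.mem_filter, Set.Finite.mem_toFinset] at hx
    exact ⟨hx.2, hx.1.2.2⟩
  have hρ1 : 1 < ρ := by
    rw [hρdef]; split
    · rename_i h; exact (hFmem _ (Ffin.min'_mem h)).1
    · norm_num
  have hρle : ∀ r ∈ {x : ℝ | ∃ s ∈ f '' A, ∃ t ∈ f '' A, t ≤ s ∧ x = s / t}, 1 < r → ρ ≤ r := by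
    intro r hr h1
    rcases le_or_gt r 2 with h2 | h2
    · have hrF : r ∈ Ffin := by
        rw [hFdef, Finset.mem_filter, Set.Finite.mem_toFinset]
        exact ⟨⟨hr, le_of_lt h1, h2⟩, h1⟩
      rw [hρdef, dif_pos ⟨r, hrF⟩]
      exact Finset.min'_le _ _ hrF
    · have : ρ ≤ 2 := by
        rw [hρdef]; split
        · rename_i h; exact (hFmem _ (Ffin.min'_mem h)).2
        · exact le_refl 2
      linarith
  have hgap : ∀ a ∈ A, ∀ b ∈ A, f a < f b → ρ * f a ≤ f b := by
    intro a ha b hb hab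
    have hrR : f b / f a ∈ {x : ℝ | ∃ s ∈ f '' A, ∃ t ∈ f '' A, t ≤ s ∧ x = s / t} :=
      ⟨f b, ⟨b, hb, rfl⟩, f a, ⟨a, ha, rfl⟩, le_of_lt hab, rfl⟩
    have h1 : 1 < f b / f a := (one_lt_div (hf a ha)).mpr hab
    have h2 := hρle _ hrR h1
    rw [le_div_iff₀ (hf a ha)] at h2
    linarith
  have hlρ : 0 < Real.log ρ := Real.log_pos hρ1
  -- the key floor-monotonicity
  have hkey : ∀ p ∈ A, ∀ q ∈ A, f p < f q →
      ⌊Real.log (f p / vmin) / Real.log ρ⌋₊ < ⌊Real.log (f q / vmin) / Real.log ρ⌋₊ := by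
    intro p hp q hq hpq
    have h1 : 1 ≤ f p / vmin := (one_le_div hvminpos).mpr (hvminle p hp)
    have hu0 : 0 ≤ Real.log (f p / vmin) / Real.log ρ :=
      div_nonneg (Real.log_nonneg h1) hlρ.le
    have h2 : ρ * (f p / vmin) ≤ f q / vmin := by
      rw [← mul_div_assoc]
      exact (div_le_div_iff_of_pos_right hvminpos).mpr (hgap p hp q hq hpq)
    have h3 : Real.log ρ + Real.log (f p / vmin) ≤ Real.log (f q / vmin) := by
      have hρ0 : (ρ:ℝ) ≠ 0 := by positivity
      have hr0 : f p / vmin ≠ 0 := by positivity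
      calc Real.log ρ + Real.log (f p / vmin) = Real.log (ρ * (f p / vmin)) :=
            (Real.log_mul hρ0 hr0).symm
      _ ≤ Real.log (f q / vmin) := Real.log_le_log (by positivity) h2
    have h4 : Real.log (f p / vmin) / Real.log ρ + 1 ≤ Real.log (f q / vmin) / Real.log ρ := by
      rw [div_add' _ _ _ (ne_of_gt hlρ), div_le_div_iff₀ hlρ hlρ]
      nlinarith [h3]
    calc ⌊Real.log (f p / vmin) / Real.log ρ⌋₊ < ⌊Real.log (f p / vmin) / Real.log ρ⌋₊ + 1 :=
          Nat.lt_succ_self _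
    _ = ⌊Real.log (f p / vmin) / Real.log ρ + 1⌋₊ := (Nat.floor_add_one hu0).symm
    _ ≤ ⌊Real.log (f q / vmin) / Real.log ρ⌋₊ := Nat.floor_mono h4
  -- constants
  set K : ℝ := Real.log (1 + C) - Real.log vmin with hKdef
  have hK0 : 0 ≤ K := by
    have h1 : 0 ≤ Real.log (1+C) := Real.log_nonneg (by linarith)
    have h2 : Real.log vmin ≤ 0 := Real.log_nonpos hvminpos.le hvmin1
    rw [hKdef]; linarith
  have hCeil1 : (1:ℤ) ≤ ⌈C⌉ := by
    have := Int.le_ceil C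
    by_contra hcon
    push_neg at hcon
    have : (⌈C⌉:ℝ) ≤ 0 := by exact_mod_cast (by omega : ⌈C⌉ ≤ 0)
    linarith [Int.le_ceil C]
  set c₂ : ℝ := 2*(⌈C⌉:ℝ)+3 with hc₂def
  have hc₂1 : 1 ≤ c₂ := by
    have : (1:ℝ) ≤ (⌈C⌉:ℝ) := by exact_mod_cast hCeil1
    rw [hc₂def]; linarith
  refine ⟨c₂ * ((K+1)/Real.log ρ + 1), ?_, ?_⟩
  · have h1 : (0:ℝ) ≤ (K+1)/Real.log ρ := div_nonneg (by linarith) hlρ.le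
    nlinarith
  intro X hX
  have hX1 : (1:ℝ) ≤ (X:ℝ) := by exact_mod_cast hX
  have hlogX : 0 ≤ Real.log X := Real.log_nonneg hX1
  -- the injection
  set UX : ℝ := Real.log (((X:ℝ)+C)/vmin) / Real.log ρ with hUXdef
  have hUX0 : 0 ≤ UX := by
    have : 1 ≤ ((X:ℝ)+C)/vmin := by
      rw [le_div_iff₀ hvminpos]
      linarith
    exact div_nonneg (Real.log_nonneg this) hlρ.le
  set P : Finset (ℕ × ℤ) := Finset.range (⌊UX⌋₊ + 1) ×ˢ Finset.Icc (-(⌈C⌉+1)) (⌈C⌉+1) with hPdef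
  set ψ : ℤ → ℕ × ℤ := fun a => (⌊Real.log (f a / vmin) / Real.log ρ⌋₊, a - ⌈f a⌉) with hψdef
  have hmaps : ∀ a ∈ A ∩ Set.Icc 1 X, ψ a ∈ P := by
    rintro a ⟨haA, ha1, haX⟩
    have hfa : vmin ≤ f a := hvminle a haA
    have habs := abs_le.mp (hC a haA)
    have haXr : (a:ℝ) ≤ (X:ℝ) := by exact_mod_cast haX
    rw [hPdef, Finset.mem_product]
    constructor
    · rw [Finset.mem_range, Nat.lt_succ_iff]
      refine Nat.floor_mono ?_
      rw [hUXdef]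
      have h5 : f a / vmin ≤ ((X:ℝ)+C) / vmin :=
        (div_le_div_iff_of_pos_right hvminpos).mpr (by linarith [habs.2])
      have h6 : Real.log (f a / vmin) ≤ Real.log (((X:ℝ)+C)/vmin) :=
        Real.log_le_log (div_pos (hf a haA) hvminpos) h5
      exact (div_le_div_iff_of_pos_right hlρ).mpr h6
    · rw [Finset.mem_Icc]
      constructor
      · have h1 : (⌈f a⌉ : ℝ) < f a + 1 := Int.ceil_lt_add_one _
        have h2 : ((a - ⌈f a⌉ : ℤ):ℝ) ≥ -(C+1) := by push_cast; linarith [habs.1]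
        have h3 : (-(⌈C⌉+1) : ℝ) ≤ -(C+1) := by
          have := Int.le_ceil C; push_cast; linarith
        have : ((-(⌈C⌉+1) : ℤ):ℝ) ≤ ((a - ⌈f a⌉ : ℤ):ℝ) := by push_cast at h2 h3 ⊢; linarith
        exact_mod_cast this
      · have h1 : f a ≤ (⌈f a⌉ : ℝ) := Int.le_ceil _
        have h2 : ((a - ⌈f a⌉ : ℤ):ℝ) ≤ C := by push_cast; linarith [habs.2]
        have h3 : (C:ℝ) ≤ ((⌈C⌉+1 : ℤ):ℝ) := by push_cast; linarith [Int.le_ceil C]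
        have : ((a - ⌈f a⌉ : ℤ):ℝ) ≤ ((⌈C⌉+1 : ℤ):ℝ) := le_trans h2 h3
        exact_mod_cast this
  have hinj : Set.InjOn ψ (A ∩ Set.Icc 1 X) := by
    intro a ha b hb hab
    rw [hψdef, Prod.mk.injEq] at hab
    have hfab : f a = f b := by
      rcases lt_trichotomy (f a) (f b) with h | h | h
      · exact absurd hab.1 (ne_of_lt (hkey a ha.1 b hb.1 h))
      · exact h
      · exact absurd hab.1.symm (ne_of_lt (hkey b hb.1 a ha.1 h))
    have : a - ⌈f a⌉ = b - ⌈f b⌉ := hab.2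
    rw [hfab] at this
    omega
  -- cardinality computation
  have hcard1 : ((A ∩ Set.Icc 1 X).ncard : ℝ) ≤ (P.card : ℝ) := by
    have h1 : (ψ '' (A ∩ Set.Icc 1 X)).ncard = (A ∩ Set.Icc 1 X).ncard :=
      Set.ncard_image_of_injOn hinj
    have h2 : ψ '' (A ∩ Set.Icc 1 X) ⊆ ↑P := by
      rintro y ⟨a, ha, rfl⟩
      exact hmaps a ha
    have h3 : (ψ '' (A ∩ Set.Icc 1 X)).ncard ≤ (↑P : Set (ℕ × ℤ)).ncard :=
      Set.ncard_le_ncard h2 P.finite_toSet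
    rw [Set.ncard_coe_finset] at h3
    exact_mod_cast (h1 ▸ h3)
  have hcard2 : (P.card : ℝ) ≤ (⌊UX⌋₊ + 1 : ℝ) * c₂ := by
    rw [hPdef, Finset.card_product, Finset.card_range]
    have h1 : (Finset.Icc (-(⌈C⌉+1)) (⌈C⌉+1)).card = (2*⌈C⌉+3).toNat := by
      rw [Int.card_Icc]
      congr 1
      ring
    rw [h1]
    have h2 : ((2*⌈C⌉+3).toNat : ℝ) = 2*(⌈C⌉:ℝ)+3 := by
      have h3 : (0:ℤ) ≤ 2*⌈C⌉+3 := by omega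
      rw [← Int.cast_natCast, Int.toNat_of_nonneg h3]
      push_cast
      ring
    rw [Nat.cast_mul, h2, hc₂def]
    push_cast
    linarith
  have hfloor : (⌊UX⌋₊ : ℝ) ≤ UX := Nat.floor_le hUX0
  have hUXK : UX * Real.log ρ ≤ Real.log X + K := by
    rw [hUXdef, div_mul_cancel₀ _ (ne_of_gt hlρ)]
    rw [Real.log_div (by positivity) (ne_of_gt hvminpos)]
    have h2 : Real.log ((X:ℝ)+C) ≤ Real.log ((X:ℝ)*(1+C)) :=
      Real.log_le_log (by positivity) (by nlinarith)
    rw [Real.log_mul (by positivity) (by positivity)] at h2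
    rw [hKdef]
    linarith
  have hq : UX + 1 ≤ (1 + Real.log X) * ((K+1)/Real.log ρ + 1) := by
    refine le_of_mul_le_mul_right ?_ hlρ
    have hr : (K+1)/Real.log ρ * Real.log ρ = K + 1 := div_mul_cancel₀ _ (ne_of_gt hlρ)
    nlinarith [hUXK, hK0, hlogX, hlρ, mul_nonneg hlogX hK0, mul_nonneg hlogX hlρ.le]
  calc ((A ∩ Set.Icc 1 X).ncard : ℝ) ≤ (P.card : ℝ) := hcard1
  _ ≤ (⌊UX⌋₊ + 1 : ℝ) * c₂ := hcard2
  _ ≤ (UX + 1) * c₂ := by nlinarith [hfloor, hc₂1]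
  _ ≤ ((1 + Real.log X) * ((K+1)/Real.log ρ + 1)) * c₂ := by
        have hpos : 0 ≤ UX + 1 := by linarith
        nlinarith [hq, hc₂1]
  _ = c₂ * ((K+1)/Real.log ρ + 1) * (1 + Real.log X) := by ring

lemma count_sigma (A : Set ℤ) (n : ℕ) (hn : 1 ≤ n) (D₀ : ℕ) (hD₀ : 1 ≤ D₀)
    (hclaim : ∀ (k : ℕ), k ≤ n → ∀ (g : Fin k → ℤ), (∀ i, g i ∈ pmSet A) →
      ∃ S : Finset (Fin k), |∑ i ∈ S, g i| ≤ (D₀:ℤ) ∧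
        ∀ i ∉ S, |g i| ≤ (D₀:ℤ) * (|∑ i, g i| + 1))
    (hApos : ∀ x ∈ A, 0 < x) (N : ℕ) (hN : 1 ≤ N) :
    (intSetToNat (sigmaSum n (pmSet A)) ∩ Set.Icc 1 N).ncard
      ≤ (2*D₀+1) * (2*((A ∩ Set.Icc 1 ((D₀:ℤ)*((N:ℤ)+1))).ncard) + 1)^n := by
  classical
  set M : ℤ := (D₀:ℤ)*((N:ℤ)+1) with hMdef
  have hpmfin : (pmSet A ∩ Set.Icc (-M) M).Finite :=
    (Set.finite_Icc _ _).subset Set.inter_subset_right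
  set Tf : Finset ℤ := insert 0 hpmfin.toFinset with hTfdef
  set Z : Finset ℤ := Finset.Icc (-(D₀:ℤ)) (D₀:ℤ) + n • Tf with hZdef
  have hmem : ∀ x ∈ intSetToNat (sigmaSum n (pmSet A)) ∩ Set.Icc 1 N, (x:ℤ) ∈ Z := by
    rintro x ⟨hx, hx1, hxN⟩
    have hx' : (x:ℤ) ∈ sigmaSum n (pmSet A) := hx
    rw [sigmaSum, Set.mem_iUnion₂] at hx'
    obtain ⟨k, hk, hxk⟩ := hx'
    rw [Finset.mem_Icc] at hk
    obtain ⟨g, hg, hsum⟩ := hxk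
    obtain ⟨S, hS1, hS2⟩ := hclaim k hk.2 g hg
    have hy : ∑ i ∈ S, g i ∈ Finset.Icc (-(D₀:ℤ)) (D₀:ℤ) := by
      rw [Finset.mem_Icc]
      constructor <;> [linarith [(abs_le.mp hS1).1]; linarith [(abs_le.mp hS1).2]]
    have habs : |∑ i, g i| = (x:ℤ) := by
      rw [← hsum]
      exact abs_of_nonneg (by positivity)
    have hz : ∑ i ∈ Sᶜ, g i ∈ n • Tf := by
      refine sum_mem_nsmulF' (Finset.mem_insert_self 0 _) _ _
        (le_trans (Finset.card_le_univ _) (by simpa using hk.2)) ?_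
      intro i hi
      have hbd := hS2 i (by simpa using hi)
      rw [habs] at hbd
      have hxNz : (x:ℤ) ≤ N := by exact_mod_cast hxN
      have hMbd : |g i| ≤ M := by
        rw [hMdef]
        calc |g i| ≤ (D₀:ℤ) * ((x:ℤ) + 1) := hbd
        _ ≤ (D₀:ℤ) * ((N:ℤ) + 1) := by
              have h0 : (0:ℤ) ≤ (D₀:ℤ) := by positivity
              nlinarith
      refine Finset.mem_insert_of_mem ?_
      rw [Set.Finite.mem_toFinset]
      refine ⟨hg i, ?_⟩
      rw [Set.mem_Icc]
      constructor <;> [linarith [(abs_le.mp hMbd).1]; linarith [(abs_le.mp hMbd).2]]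
    have hxeq : (x:ℤ) = ∑ i ∈ S, g i + ∑ i ∈ Sᶜ, g i := by
      rw [Finset.sum_add_sum_compl, hsum]
    rw [hZdef, hxeq]
    exact Finset.add_mem_add hy hz
  -- cardinality chain
  have hsub : intSetToNat (sigmaSum n (pmSet A)) ∩ Set.Icc 1 N ⊆ Int.toNat '' (↑Z : Set ℤ) := by
    intro x hx
    exact ⟨(x:ℤ), hmem x hx, Int.toNat_natCast x⟩
  have h1 : (intSetToNat (sigmaSum n (pmSet A)) ∩ Set.Icc 1 N).ncard
      ≤ (Int.toNat '' (↑Z : Set ℤ)).ncard :=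
    Set.ncard_le_ncard hsub (Z.finite_toSet.image _)
  have h2 : (Int.toNat '' (↑Z : Set ℤ)).ncard ≤ Z.card := by
    have := Set.ncard_image_le (s := (↑Z : Set ℤ)) (f := Int.toNat) Z.finite_toSet
    rwa [Set.ncard_coe_finset] at this
  have h3 : Z.card ≤ (2*D₀+1) * Tf.card^n := by
    rw [hZdef]
    refine le_trans Finset.card_add_le ?_
    have hIcc : (Finset.Icc (-(D₀:ℤ)) (D₀:ℤ)).card = 2*D₀+1 := by
      rw [Int.card_Icc]
      omega
    rw [hIcc]
    exact Nat.mul_le_mul_left _ Finset.card_nsmul_le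
  have h4 : Tf.card ≤ 2*((A ∩ Set.Icc 1 M).ncard) + 1 := by
    rw [hTfdef]
    refine le_trans (Finset.card_insert_le _ _) ?_
    have h5 : hpmfin.toFinset.card = (pmSet A ∩ Set.Icc (-M) M).ncard :=
      (Set.ncard_eq_toFinset_card _ hpmfin).symm
    have h6 : (pmSet A ∩ Set.Icc (-M) M).ncard ≤ 2*((A ∩ Set.Icc 1 M).ncard) := by
      have hsub2 : pmSet A ∩ Set.Icc (-M) M
          ⊆ (A ∩ Set.Icc 1 M) ∪ (Neg.neg '' (A ∩ Set.Icc 1 M)) := by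
        rintro y ⟨hyA, hy1, hy2⟩
        have hyabs : |y| ∈ A := hyA
        have hy0 : y ≠ 0 := by
          rintro rfl
          exact absurd (hApos 0 (by simpa using hyabs)) (lt_irrefl 0)
        rcases lt_trichotomy y 0 with h | h | h
        · right
          rw [abs_of_neg h] at hyabs
          refine ⟨-y, ⟨hyabs, by omega, by omega⟩, by ring⟩
        · exact absurd h hy0
        · left
          rw [abs_of_pos h] at hyabs
          exact ⟨hyabs, by omega, hy2⟩
      have hfin1 : (A ∩ Set.Icc 1 M).Finite := (Set.finite_Icc _ _).subset Set.inter_subset_right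
      calc (pmSet A ∩ Set.Icc (-M) M).ncard
          ≤ ((A ∩ Set.Icc 1 M) ∪ (Neg.neg '' (A ∩ Set.Icc 1 M))).ncard :=
            Set.ncard_le_ncard hsub2 (hfin1.union (hfin1.image _))
      _ ≤ (A ∩ Set.Icc 1 M).ncard + (Neg.neg '' (A ∩ Set.Icc 1 M)).ncard :=
            Set.ncard_union_le _ _
      _ ≤ 2*((A ∩ Set.Icc 1 M).ncard) := by
            have := Set.ncard_image_le (s := A ∩ Set.Icc 1 M) (f := Neg.neg) hfin1
            omega
    omega
  calc (intSetToNat (sigmaSum n (pmSet A)) ∩ Set.Icc 1 N).ncard ≤ Z.card := le_trans h1 h2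
  _ ≤ (2*D₀+1) * Tf.card^n := h3
  _ ≤ (2*D₀+1) * (2*((A ∩ Set.Icc 1 M).ncard) + 1)^n := by
        exact Nat.mul_le_mul_left _ (Nat.pow_le_pow_left h4 n)

lemma tendsto_aux (a b c' : ℝ) (ha : 0 ≤ a) (hb : 0 ≤ b) (hc' : 0 ≤ c') (n : ℕ) :
    Tendsto (fun x : ℝ => c' * (a + b * Real.log x)^n / x) atTop (𝓝 0) := by
  have hmain : Tendsto (fun x : ℝ => (c' * (1+b)^n) * (Real.log x ^ n / (1*x+0))) atTop (𝓝 0) := by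
    have := (Real.tendsto_pow_log_div_mul_add_atTop 1 0 n one_ne_zero).const_mul (c' * (1+b)^n)
    simpa using this
  refine squeeze_zero' ?_ ?_ hmain
  · filter_upwards [eventually_ge_atTop (max (Real.exp a) 1)] with x hx
    have hx1 : (1:ℝ) ≤ x := le_trans (le_max_right _ _) hx
    have hxa : Real.exp a ≤ x := le_trans (le_max_left _ _) hx
    have hloga : a ≤ Real.log x := by
      rw [← Real.log_exp a]
      exact Real.log_le_log (Real.exp_pos a) hxa
    have hlog0 : 0 ≤ Real.log x := Real.log_nonneg hx1
    have h1 : 0 ≤ (a + b*Real.log x)^n := pow_nonneg (by nlinarith) n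
    have hx0 : (0:ℝ) < x := lt_of_lt_of_le one_pos hx1
    exact div_nonneg (mul_nonneg hc' h1) hx0.le
  · filter_upwards [eventually_ge_atTop (max (Real.exp a) 1)] with x hx
    have hx1 : (1:ℝ) ≤ x := le_trans (le_max_right _ _) hx
    have hxa : Real.exp a ≤ x := le_trans (le_max_left _ _) hx
    have hloga : a ≤ Real.log x := by
      rw [← Real.log_exp a]
      exact Real.log_le_log (Real.exp_pos a) hxa
    have hlog0 : 0 ≤ Real.log x := Real.log_nonneg hx1
    have hx0 : 0 < x := lt_of_lt_of_le one_pos hx1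
    have hbound : (a + b * Real.log x)^n ≤ (1+b)^n * Real.log x ^ n := by
      rw [← mul_pow]
      refine pow_le_pow_left₀ (by nlinarith) ?_ n
      nlinarith
    rw [div_le_iff₀ hx0]
    have : c' * (1+b)^n * (Real.log x ^ n / (1*x+0)) * x = c' * ((1+b)^n * Real.log x ^ n) := by
      field_simp
      ring
    rw [this]
    nlinarith [hbound, pow_nonneg hlog0 n, pow_nonneg (by nlinarith : (0:ℝ) ≤ 1+b) n]


set_option maxHeartbeats 1600000 in
/-- If `A ⊆ ℤ⁺` is geometrically sparse then `A` is sufficiently sparse. -/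
theorem geomSparse_suffSparse (A : Set ℤ) (hApos : ∀ x ∈ A, 0 < x) (hGS : GeomSparse A) :
    SuffSparse A := by
  obtain ⟨f, hfpos, ⟨hcl, hdis⟩, C₀, hC₀⟩ := hGS
  intro n hn
  set C : ℝ := max C₀ 1 with hCdef
  have hC : ∀ a ∈ A, |(a:ℝ) - f a| ≤ C := fun a ha => le_trans (hC₀ a ha) (le_max_left _ _)
  have hC1 : (1:ℝ) ≤ C := le_max_right _ _
  obtain ⟨D₀, hD₀1, hclaim⟩ := claim_int A f C n hn hApos hfpos hcl hdis hC hC1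
  obtain ⟨c, hc1, hcount⟩ := countA_le A f C hApos hfpos hcl hdis hC hC1
  have hc0 : (0:ℝ) ≤ c := le_trans zero_le_one hc1
  have hD₀r1 : (1:ℝ) ≤ (D₀:ℝ) := by exact_mod_cast hD₀1
  have hlogD₀ : 0 ≤ Real.log D₀ := Real.log_nonneg hD₀r1
  set a : ℝ := 2*c*(1+Real.log D₀)+1 with hadef
  set b : ℝ := 2*c with hbdef
  have ha0 : 0 ≤ a := by rw [hadef]; nlinarith
  have hb0 : 0 ≤ b := by rw [hbdef]; linarith
  have hub : ∀ N : ℕ, 1 ≤ N →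
      ((intSetToNat (sigmaSum n (pmSet A)) ∩ Set.Icc 1 N).ncard : ℝ) / N
        ≤ 2*(2*(D₀:ℝ)+1) * (a + b*Real.log ((N:ℝ)+1))^n / ((N:ℝ)+1) := by
    intro N hN
    have hNr : (1:ℝ) ≤ (N:ℝ) := by exact_mod_cast hN
    set L : ℕ := (A ∩ Set.Icc 1 ((D₀:ℤ)*((N:ℤ)+1))).ncard with hLdef
    have hcount1 : ((intSetToNat (sigmaSum n (pmSet A)) ∩ Set.Icc 1 N).ncard : ℝ)
        ≤ (2*(D₀:ℝ)+1) * (2*(L:ℝ)+1)^n := by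
      have h0 := count_sigma A n hn D₀ hD₀1 hclaim hApos N hN
      calc ((intSetToNat (sigmaSum n (pmSet A)) ∩ Set.Icc 1 N).ncard : ℝ)
          ≤ (((2*D₀+1) * (2*L+1)^n : ℕ) : ℝ) := by exact_mod_cast h0
      _ = (2*(D₀:ℝ)+1) * (2*(L:ℝ)+1)^n := by push_cast; ring
    have hNz1 : (1:ℤ) ≤ (N:ℤ) := by exact_mod_cast hN
    have hD₀z1 : (1:ℤ) ≤ (D₀:ℤ) := by exact_mod_cast hD₀1
    have hM1 : (1:ℤ) ≤ (D₀:ℤ)*((N:ℤ)+1) := by nlinarith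
    have hLb : (L:ℝ) ≤ c * (1 + Real.log ((D₀:ℝ)*((N:ℝ)+1))) := by
      have h1 := hcount ((D₀:ℤ)*((N:ℤ)+1)) hM1
      rw [hLdef]
      have h2 : (((D₀:ℤ)*((N:ℤ)+1) : ℤ) : ℝ) = (D₀:ℝ)*((N:ℝ)+1) := by push_cast; ring
      rw [h2] at h1
      exact h1
    have hlogsplit : Real.log ((D₀:ℝ)*((N:ℝ)+1)) = Real.log D₀ + Real.log ((N:ℝ)+1) :=
      Real.log_mul (by linarith) (by linarith)
    have hlogN1 : 0 ≤ Real.log ((N:ℝ)+1) := Real.log_nonneg (by linarith)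
    have hinner : 2*(L:ℝ)+1 ≤ a + b*Real.log ((N:ℝ)+1) := by
      rw [hlogsplit] at hLb
      rw [hadef, hbdef]
      nlinarith [hLb]
    have hL0 : (0:ℝ) ≤ 2*(L:ℝ)+1 := by positivity
    have hpow : (2*(L:ℝ)+1)^n ≤ (a + b*Real.log ((N:ℝ)+1))^n := pow_le_pow_left₀ hL0 hinner n
    have hN0 : (0:ℝ) < N := by linarith
    have hN10 : (0:ℝ) < (N:ℝ)+1 := by linarith
    rw [div_le_div_iff₀ hN0 hN10]
    have h2N : (N:ℝ)+1 ≤ 2*(N:ℝ) := by linarith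
    have hD₀r : (0:ℝ) ≤ 2*(D₀:ℝ)+1 := by linarith
    have hQle : ((intSetToNat (sigmaSum n (pmSet A)) ∩ Set.Icc 1 N).ncard : ℝ)
        ≤ (2*(D₀:ℝ)+1) * (a + b*Real.log ((N:ℝ)+1))^n :=
      le_trans hcount1 (mul_le_mul_of_nonneg_left hpow hD₀r)
    have hQ0 : 0 ≤ (2*(D₀:ℝ)+1) * (a + b*Real.log ((N:ℝ)+1))^n :=
      mul_nonneg hD₀r (pow_nonneg (by nlinarith) n)
    calc ((intSetToNat (sigmaSum n (pmSet A)) ∩ Set.Icc 1 N).ncard : ℝ) * ((N:ℝ)+1)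
        ≤ ((2*(D₀:ℝ)+1) * (a + b*Real.log ((N:ℝ)+1))^n) * ((N:ℝ)+1) :=
          mul_le_mul_of_nonneg_right hQle (by linarith)
    _ ≤ ((2*(D₀:ℝ)+1) * (a + b*Real.log ((N:ℝ)+1))^n) * (2*(N:ℝ)) :=
          mul_le_mul_of_nonneg_left h2N hQ0
    _ = 2*(2*(D₀:ℝ)+1) * (a + b*Real.log ((N:ℝ)+1))^n * (N:ℝ) := by ring
  have htend : Tendsto (fun N : ℕ =>
      2*(2*(D₀:ℝ)+1) * (a + b*Real.log ((N:ℝ)+1))^n / ((N:ℝ)+1)) atTop (𝓝 0) := by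
    have h1 := tendsto_aux a b (2*(2*(D₀:ℝ)+1)) ha0 hb0 (by linarith) n
    have h2 : Tendsto (fun N : ℕ => (N:ℝ)+1) atTop atTop :=
      tendsto_atTop_add_const_right _ 1 tendsto_natCast_atTop_atTop
    exact h1.comp h2
  have hzero : Tendsto (fun N : ℕ =>
      ((intSetToNat (sigmaSum n (pmSet A)) ∩ Set.Icc 1 N).ncard : ℝ)/N) atTop (𝓝 0) := by
    refine squeeze_zero' ?_ ?_ htend
    · filter_upwards with N
      exact div_nonneg (Nat.cast_nonneg _) (Nat.cast_nonneg _)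
    · filter_upwards [eventually_ge_atTop 1] with N hN
      exact hub N hN
  show lowerDensity _ = 0
  unfold lowerDensity
  exact hzero.liminf_eq
end

section
/- Let A ⊆ ℤ⁺ be infinite and geometrically sparse, with strictly increasing enumeration (a_n)_{n=0}^∞. Then there exist real numbers δ > 0 and b > 1 such that a_n/a_m ≥ δ·b^{n−m} for all m, n ∈ ℕ with m < n. -/
open Filter Pointwise

lemma chain_pow_min_le_max (q : ℝ) (hq : 1 ≤ q) :
    ∀ V : Finset ℝ, ∀ hV : V.Nonempty, (∀ u ∈ V, ∀ v ∈ V, u < v → q * u ≤ v) →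
      q ^ (V.card - 1) * V.min' hV ≤ V.max' hV := by
  intro V
  induction V using Finset.strongInduction with
  | _ V ih =>
    intro hV hrat
    rcases le_or_gt V.card 1 with h1 | h2
    · have h0 : V.card - 1 = 0 := by omega
      rw [h0, pow_zero, one_mul]
      exact V.min'_le _ (V.max'_mem hV)
    · set m := V.min' hV with hm
      have hmV : m ∈ V := V.min'_mem hV
      set V' := V.erase m with hV'
      have hss : V' ⊂ V := Finset.erase_ssubset hmV
      have hcard : V'.card = V.card - 1 := Finset.card_erase_of_mem hmV
      have hV'ne : V'.Nonempty := by
        rw [← Finset.card_pos, hcard]; omega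
      have hsub : V' ⊆ V := Finset.erase_subset _ _
      have key := ih V' hss hV'ne
        (fun u hu v hv huv => hrat u (hsub hu) v (hsub hv) huv)
      have hminV' : V'.min' hV'ne ∈ V := hsub (V'.min'_mem hV'ne)
      have hlt : m < V'.min' hV'ne := by
        have hle : m ≤ V'.min' hV'ne := V.min'_le _ hminV'
        have hne : V'.min' hV'ne ≠ m := Finset.ne_of_mem_erase (V'.min'_mem hV'ne)
        exact lt_of_le_of_ne hle (Ne.symm hne)
      have hq1 : q * m ≤ V'.min' hV'ne := hrat m hmV _ hminV' hlt
      have hmax : V'.max' hV'ne ≤ V.max' hV := V.le_max' _ (hsub (V'.max'_mem hV'ne))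
      have hqpow : (0:ℝ) ≤ q ^ (V'.card - 1) := pow_nonneg (le_trans zero_le_one hq) _
      have hstep : q ^ (V.card - 1) * m = q ^ (V'.card - 1) * (q * m) := by
        have h3 : V.card - 1 = (V'.card - 1) + 1 := by omega
        rw [h3, pow_succ]; ring
      rw [hstep]
      calc q ^ (V'.card - 1) * (q * m) ≤ q ^ (V'.card - 1) * V'.min' hV'ne :=
            mul_le_mul_of_nonneg_left hq1 hqpow
        _ ≤ V'.max' hV'ne := key
        _ ≤ V.max' hV := hmax

set_option maxHeartbeats 1000000 in
theorem geomSparse_growth' (A : Set ℤ) (hApos : ∀ x ∈ A, 0 < x)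
    (f : ℤ → ℝ) (hfpos : ∀ a ∈ A, 0 < f a)
    (hclosed : IsClosed {x : ℝ | ∃ s ∈ f '' A, ∃ t ∈ f '' A, t ≤ s ∧ x = s / t})
    (hdisc : DiscreteTopology {x : ℝ | ∃ s ∈ f '' A, ∃ t ∈ f '' A, t ≤ s ∧ x = s / t})
    (C0 : ℝ) (hC0 : ∀ a ∈ A, |(a : ℝ) - f a| ≤ C0)
    (a : ℕ → ℤ) (ha : StrictMono a) (hrange : Set.range a = A) :
    ∃ δ b : ℝ, 0 < δ ∧ 1 < b ∧
      ∀ m n : ℕ, m < n → δ * b ^ (n - m) ≤ (a n : ℝ) / (a m : ℝ) := by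
  set R := {x : ℝ | ∃ s ∈ f '' A, ∃ t ∈ f '' A, t ≤ s ∧ x = s / t} with hRdef
  set C := max C0 1 with hCdef
  have hC : ∀ x ∈ A, |(x:ℝ) - f x| ≤ C := fun x hx => (hC0 x hx).trans (le_max_left _ _)
  have hC1 : (1:ℝ) ≤ C := le_max_right _ _
  have hCpos : (0:ℝ) < C := lt_of_lt_of_le one_pos hC1
  have haA : ∀ i, a i ∈ A := fun i => hrange ▸ Set.mem_range_self i
  have hapos : ∀ i, 0 < a i := fun i => hApos _ (haA i)
  have hstep : ∀ m k : ℕ, a m + k ≤ a (m + k) := by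
    intro m k
    induction k with
    | zero => simp
    | succ k ihk =>
      have h1 : a (m + k) < a (m + k + 1) := ha (Nat.lt_succ_self (m + k))
      have h2 : a (m + (k + 1)) = a (m + k + 1) := rfl
      push_cast
      push_cast at ihk
      omega
  have ha1 : ∀ i : ℕ, (i:ℤ) + 1 ≤ a i := by
    intro i
    have h0 : 1 ≤ a 0 := hapos 0
    have h1 := hstep 0 i
    simp only [Nat.zero_add] at h1
    omega
  -- finiteness of R ∩ [1,2]
  have hTfin : (R ∩ Set.Icc 1 2).Finite := by
    have hcpt : IsCompact (R ∩ Set.Icc (1:ℝ) 2) := (isCompact_Icc).inter_left hclosed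
    have hd : DiscreteTopology (R ∩ Set.Icc (1:ℝ) 2 : Set ℝ) :=
      DiscreteTopology.of_subset hdisc Set.inter_subset_left
    exact hcpt.finite (isDiscrete_iff_discreteTopology.mpr hd)
  -- the minimal ratio q
  obtain ⟨q, hq1, hq2, hqmin⟩ : ∃ q : ℝ, 1 < q ∧ q ≤ 2 ∧ ∀ x ∈ R, 1 < x → q ≤ x := by
    by_cases hT : (R ∩ Set.Ioc 1 2).Nonempty
    · have hfin : (R ∩ Set.Ioc 1 2).Finite :=
        hTfin.subset (fun x hx => ⟨hx.1, hx.2.1.le, hx.2.2⟩)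
      have hTFne : hfin.toFinset.Nonempty := by
        rwa [Set.Finite.toFinset_nonempty]
      refine ⟨hfin.toFinset.min' hTFne, ?_, ?_, ?_⟩
      · have h := hfin.toFinset.min'_mem hTFne
        rw [Set.Finite.mem_toFinset] at h
        exact h.2.1
      · have h := hfin.toFinset.min'_mem hTFne
        rw [Set.Finite.mem_toFinset] at h
        exact h.2.2
      · intro x hx hx1
        rcases le_or_gt x 2 with h | h
        · exact hfin.toFinset.min'_le x (by rw [Set.Finite.mem_toFinset]; exact ⟨hx, hx1, h⟩)
        · refine le_trans ?_ h.le
          have hm := hfin.toFinset.min'_mem hTFne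
          rw [Set.Finite.mem_toFinset] at hm
          exact hm.2.2
    · refine ⟨2, one_lt_two, le_refl 2, fun x hx hx1 => ?_⟩
      rcases le_or_gt x 2 with h | h
      · exact absurd ⟨x, hx, hx1, h⟩ hT
      · exact h.le
  have hq0 : (0:ℝ) < q := lt_trans one_pos hq1
  -- the function g
  set g : ℕ → ℝ := fun i => f (a i) with hgdef
  have hgpos : ∀ i, 0 < g i := fun i => hfpos _ (haA i)
  have hgC : ∀ i, |((a i : ℤ) : ℝ) - g i| ≤ C := fun i => hC _ (haA i)
  have hgCl : ∀ i, (a i : ℝ) - C ≤ g i ∧ g i ≤ (a i : ℝ) + C := by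
    intro i
    have := abs_le.1 (hgC i)
    constructor <;> linarith [this.1, this.2]
  have hgrat : ∀ i j : ℕ, g i < g j → q * g i ≤ g j := by
    intro i j hij
    have hmem : g j / g i ∈ R := ⟨g j, ⟨a j, haA j, rfl⟩, g i, ⟨a i, haA i, rfl⟩, hij.le, rfl⟩
    have h1 : 1 < g j / g i := (one_lt_div (hgpos i)).2 hij
    have h2 := hqmin _ hmem h1
    rw [le_div_iff₀ (hgpos i)] at h2
    exact h2
  -- K and the fiber bound
  set K : ℕ := ⌊2*C⌋₊ + 1 with hKdef
  have hKpos : (0:ℝ) < K := by positivity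
  set b : ℝ := q ^ ((K:ℝ)⁻¹) with hbdef
  have hb1 : 1 < b := by
    rw [hbdef]
    exact (Real.one_lt_rpow_iff_of_pos hq0).2 (Or.inl ⟨hq1, by positivity⟩)
  have hb0 : (0:ℝ) < b := lt_trans one_pos hb1
  set δ0 : ℝ := 1 / (4*q) with hδ0def
  have hδ0pos : 0 < δ0 := by positivity
  have hδ0le : δ0 ≤ 1 := by
    rw [hδ0def]
    rw [div_le_one (by positivity)]
    linarith
  -- core inequality
  have hcore : ∀ m n : ℕ, m < n → 2*C ≤ (a m : ℝ) → δ0 * b ^ (n - m) ≤ (a n : ℝ) / (a m : ℝ) := by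
    intro m n hmn h2C
    have ham : (0:ℝ) < (a m : ℝ) := by exact_mod_cast hapos m
    have han : (0:ℝ) < (a n : ℝ) := by exact_mod_cast hapos n
    set s : Finset ℕ := Finset.Icc m n with hsdef
    set V : Finset ℝ := s.image g with hVdef
    have hVne : V.Nonempty := by
      refine Finset.Nonempty.image ?_ g
      exact ⟨m, Finset.mem_Icc.2 ⟨le_refl m, hmn.le⟩⟩
    set r : ℕ := V.card with hrdef
    have hrpos : 0 < r := Finset.card_pos.2 hVne
    -- fiber bound: s.card ≤ K * r
    have hfib : s.card ≤ K * r := by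
      refine Finset.card_le_mul_card_image s K ?_
      intro v hv
      set F := {x ∈ s | g x = v} with hFdef
      rcases F.eq_empty_or_nonempty with hF | hFne
      · rw [hF]; simp
      · set i0 := F.min' hFne with hi0
        have hFsub : F ⊆ Finset.Icc i0 (i0 + ⌊2*C⌋₊) := by
          intro i hi
          have hi0le : i0 ≤ i := F.min'_le i hi
          have hi0F : i0 ∈ F := F.min'_mem hFne
          have hgi : g i = v := (Finset.mem_filter.1 hi).2
          have hgi0 : g i0 = v := (Finset.mem_filter.1 hi0F).2
          have hai : (a i : ℝ) - (a i0 : ℝ) ≤ 2*C := by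
            have h1 := hgCl i
            have h2 := hgCl i0
            rw [hgi] at h1; rw [hgi0] at h2
            linarith [h1.1, h2.2]
          have hstep2 : a i0 + (i - i0 : ℕ) ≤ a i := by
            have := hstep i0 (i - i0)
            rwa [Nat.add_sub_cancel' hi0le] at this
          have hle : ((i - i0 : ℕ) : ℝ) ≤ 2*C := by
            have : ((a i0 : ℤ) : ℝ) + ((i - i0 : ℕ) : ℝ) ≤ ((a i : ℤ) : ℝ) := by
              exact_mod_cast hstep2
            linarith
          have : i - i0 ≤ ⌊2*C⌋₊ := Nat.le_floor hle
          exact Finset.mem_Icc.2 ⟨hi0le, by omega⟩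
        calc F.card ≤ (Finset.Icc i0 (i0 + ⌊2*C⌋₊)).card := Finset.card_le_card hFsub
          _ = ⌊2*C⌋₊ + 1 := by rw [Nat.card_Icc]; omega
          _ = K := rfl
    have hscard : s.card = n - m + 1 := by rw [hsdef, Nat.card_Icc]; omega
    -- chain bound
    have hchain : q ^ (r - 1) * V.min' hVne ≤ V.max' hVne := by
      refine chain_pow_min_le_max q hq1.le V hVne ?_
      intro u hu v hv huv
      obtain ⟨i, _, rfl⟩ := Finset.mem_image.1 hu
      obtain ⟨j, _, rfl⟩ := Finset.mem_image.1 hv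
      exact hgrat i j huv
    -- min and max bounds
    have hmin_lb : (a m : ℝ) - C ≤ V.min' hVne := by
      obtain ⟨j, hj, hgj⟩ := Finset.mem_image.1 (V.min'_mem hVne)
      have hjm : m ≤ j := (Finset.mem_Icc.1 hj).1
      have : (a m : ℝ) ≤ (a j : ℝ) := by exact_mod_cast ha.monotone hjm
      rw [← hgj]
      linarith [(hgCl j).1]
    have hmax_ub : V.max' hVne ≤ (a n : ℝ) + C := by
      obtain ⟨j, hj, hgj⟩ := Finset.mem_image.1 (V.max'_mem hVne)
      have hjn : j ≤ n := (Finset.mem_Icc.1 hj).2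
      have : (a j : ℝ) ≤ (a n : ℝ) := by exact_mod_cast ha.monotone hjn
      rw [← hgj]
      linarith [(hgCl j).2]
    -- b ^ (n-m) ≤ q ^ r
    have hpow : b ^ (n - m) ≤ q ^ r := by
      have e1 : b ^ (n - m) = q ^ (((n - m : ℕ) : ℝ) * (K:ℝ)⁻¹) := by
        rw [hbdef, ← Real.rpow_natCast (q ^ ((K:ℝ)⁻¹)) (n - m), ← Real.rpow_mul hq0.le]
        ring_nf
      have e2 : (q : ℝ) ^ r = q ^ ((r : ℕ) : ℝ) := by
        rw [Real.rpow_natCast]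
      rw [e1, e2]
      apply Real.rpow_le_rpow_of_exponent_le hq1.le
      have h1 : ((n - m : ℕ) : ℝ) ≤ (K : ℝ) * r := by
        have h0 : (n - m : ℕ) + 1 ≤ K * r := by rw [← hscard]; exact hfib
        have hnat : n - m ≤ K * r := by omega
        exact_mod_cast hnat
      calc ((n - m : ℕ) : ℝ) * (K:ℝ)⁻¹ ≤ ((K:ℝ) * r) * (K:ℝ)⁻¹ := by
            apply mul_le_mul_of_nonneg_right h1 (by positivity)
        _ = r := by field_simp
    -- assemble
    have hqr1 : q ^ (r - 1) = q ^ r / q := by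
      have : r = (r - 1) + 1 := by omega
      rw [this]
      rw [pow_succ]
      field_simp
      rw [Nat.add_sub_cancel]
    have hamC : (a m : ℝ) / 2 ≤ (a m : ℝ) - C := by linarith
    have hpowpos : (0:ℝ) ≤ q ^ (r - 1) := by positivity
    have hkey : q ^ (r-1) * ((a m : ℝ) - C) - C ≤ (a n : ℝ) := by
      have h1 : q ^ (r-1) * ((a m : ℝ) - C) ≤ q ^ (r-1) * V.min' hVne :=
        mul_le_mul_of_nonneg_left hmin_lb hpowpos
      linarith [hchain, hmax_ub]
    rw [le_div_iff₀ ham]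
    -- case split
    set X : ℝ := b ^ (n - m) with hX
    have hXpos : (0:ℝ) < X := by positivity
    have hamn : (a m : ℝ) ≤ (a n : ℝ) := by exact_mod_cast (ha hmn).le
    rcases le_or_gt X (4*q) with hc | hc
    · have : δ0 * X * (a m : ℝ) ≤ (a m : ℝ) := by
        have h1 : δ0 * X ≤ 1 := by
          rw [hδ0def]
          rw [div_mul_eq_mul_div, div_le_one (by positivity)]
          linarith
        have h2 := mul_le_mul_of_nonneg_right h1 ham.le
        linarith
      linarith
    · -- X > 4q
      have h1 : X / q * ((a m : ℝ) / 2) - C ≤ (a n : ℝ) := by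
        have h2 : X / q ≤ q ^ (r - 1) := by
          rw [hqr1]
          exact div_le_div_of_nonneg_right hpow hq0.le
        have h3 : X / q * ((a m : ℝ)/2) ≤ q ^ (r-1) * ((a m : ℝ) - C) := by
          have := mul_le_mul h2 hamC (by positivity) hpowpos
          linarith
        linarith
      have h4 : C ≤ X * (a m : ℝ) / (4*q) := by
        have h5 : (4*q)*(2*C) ≤ X * (a m : ℝ) :=
          mul_le_mul hc.le h2C (by positivity) hXpos.le
        rw [le_div_iff₀ (by positivity)]
        nlinarith [mul_pos hq0 hCpos]
      have h6 : δ0 * X * (a m : ℝ) = X * (a m : ℝ) / (4*q) := by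
        rw [hδ0def]; ring
      rw [h6]
      have h7 : X / q * ((a m : ℝ)/2) = X * (a m : ℝ)/(4*q) + X * (a m : ℝ)/(4*q) := by
        field_simp
        ring
      linarith
  -- final assembly
  set m0 : ℕ := ⌈2*C⌉₊ with hm0def
  have h2Cm : ∀ m, m0 ≤ m → 2*C ≤ (a m : ℝ) := by
    intro m hm
    have h1 : (2*C) ≤ (m0:ℝ) := Nat.le_ceil _
    have h2 : (m0:ℝ) ≤ (m:ℝ) := by exact_mod_cast hm
    have h3 : (m:ℝ) + 1 ≤ (a m : ℝ) := by exact_mod_cast ha1 m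
    linarith
  have hbm0pos : (0:ℝ) < b ^ m0 := by positivity
  have hbm0ge : (1:ℝ) ≤ b ^ m0 := one_le_pow₀ hb1.le
  refine ⟨δ0 / b ^ m0, b, by positivity, hb1, ?_⟩
  intro m n hmn
  have ham : (0:ℝ) < (a m : ℝ) := by exact_mod_cast hapos m
  have han : (0:ℝ) < (a n : ℝ) := by exact_mod_cast hapos n
  have hamn : (a m : ℝ) ≤ (a n : ℝ) := by exact_mod_cast (ha hmn).le
  rcases le_or_gt n m0 with hn | hn
  · have hle : (1:ℝ) ≤ (a n : ℝ) / (a m : ℝ) := (one_le_div ham).2 hamn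
    have hbb : b ^ (n - m) ≤ b ^ m0 := pow_le_pow_right₀ hb1.le (by omega)
    have h1 : δ0 / b ^ m0 * b ^ (n-m) ≤ δ0 := by
      rw [div_mul_eq_mul_div, div_le_iff₀ hbm0pos]
      exact mul_le_mul_of_nonneg_left hbb hδ0pos.le
    linarith
  · rcases le_or_gt m0 m with hm | hm
    · have h1 := hcore m n hmn (h2Cm m hm)
      have h2 : δ0 / b^m0 * b^(n-m) ≤ δ0 * b^(n-m) := by
        have h3 : δ0 / b ^ m0 ≤ δ0 := by
          rw [div_le_iff₀ hbm0pos]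
          nlinarith
        exact mul_le_mul_of_nonneg_right h3 (by positivity)
      linarith
    · have h1 := hcore m0 n hn (h2Cm m0 le_rfl)
      have ham0 : (0:ℝ) < (a m0 : ℝ) := by exact_mod_cast hapos m0
      have hmm0 : (a m : ℝ) ≤ (a m0 : ℝ) := by exact_mod_cast ha.monotone hm.le
      have h2 : (a n : ℝ) / (a m0 : ℝ) ≤ (a n : ℝ) / (a m : ℝ) :=
        div_le_div_of_nonneg_left han.le ham hmm0
      have hbb : b ^ (n - m) ≤ b ^ (n - m0) * b ^ m0 := by
        rw [← pow_add]
        exact pow_le_pow_right₀ hb1.le (by omega)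
      have h3 : δ0 / b^m0 * b^(n-m) ≤ δ0 * b^(n-m0) := by
        rw [div_mul_eq_mul_div, div_le_iff₀ hbm0pos]
        calc δ0 * b^(n-m) ≤ δ0 * (b^(n-m0) * b^m0) := mul_le_mul_of_nonneg_left hbb hδ0pos.le
          _ = δ0 * b^(n-m0) * b^m0 := by ring
      linarith

/-- If `A ⊆ ℤ⁺` is infinite and geometrically sparse with strictly increasing
enumeration `(a_n)`, then there are `δ > 0` and `b > 1` with `a_n/a_m ≥ δ·b^{n−m}` for all
`m < n`. -/
theorem geomSparse_growth (A : Set ℤ) (hApos : ∀ x ∈ A, 0 < x) (hGS : GeomSparse A)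
    (a : ℕ → ℤ) (ha : StrictMono a) (hrange : Set.range a = A) :
    ∃ δ b : ℝ, 0 < δ ∧ 1 < b ∧
      ∀ m n : ℕ, m < n → δ * b ^ (n - m) ≤ (a n : ℝ) / (a m : ℝ) := by
  obtain ⟨f, hfpos, ⟨hclosed, hdisc⟩, C0, hC0⟩ := hGS
  exact geomSparse_growth' A hApos f hfpos hclosed hdisc C0 hC0 a ha hrange
end

section
/- Let A ⊆ ℤ⁺ be infinite with strictly increasing enumeration (a_n)_{n=0}^∞, let (λ_m)_{m=0}^∞ be positive reals, f : ℕ → ℕ, and Θ ≥ 0 a real with |a_n − λ_{f(n)}| ≤ Θ for all n ∈ ℕ. Fix integers k, l ≥ 1 and r ∈ ℤ, and set s = max{|r|, ⌈(k+l)Θ⌉}. Suppose (m̄,n̄) ∈ A(k,l,r), and suppose there are nonempty subsets I* ⊆ {1,…,k} and J* ⊆ {1,…,l}, at least one of which is proper, such that Σ_{i∈I*} λ_{f(m_i)} = Σ_{j∈J*} λ_{f(n_j)}. Then (m̄,n̄) ∈ A(k,l,r,s). -/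
open Filter Pointwise

/-- `(m̄,n̄) ∈ A(k,l,r)`: `r + a_{m_1} + ⋯ + a_{m_k} = a_{n_1} + ⋯ + a_{n_l}`, where
`(a_i)` enumerates `A`. -/
def inRel (a : ℕ → ℤ) {k l : ℕ} (r : ℤ) (m : Fin k → ℕ) (n : Fin l → ℕ) : Prop :=
  r + ∑ i, a (m i) = ∑ j, a (n j)

/-- `(m̄,n̄) ∈ A(k,l,r,s)`: there are `s'` with `|s'| ≤ s` and proper subsets `I ⊊ [k]`,
`J ⊊ [l]`, not both empty, with `r + s' + Σ_{i∈I} a_{m_i} = Σ_{j∈J} a_{n_j}` and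
`Σ_{i∉I} a_{m_i} = s' + Σ_{j∉J} a_{n_j}`. -/
def inRelS (a : ℕ → ℤ) {k l : ℕ} (r s : ℤ) (m : Fin k → ℕ) (n : Fin l → ℕ) : Prop :=
  ∃ s' : ℤ, |s'| ≤ s ∧ ∃ (I : Finset (Fin k)) (J : Finset (Fin l)),
    I ≠ Finset.univ ∧ J ≠ Finset.univ ∧ (I.Nonempty ∨ J.Nonempty) ∧
    r + s' + ∑ i ∈ I, a (m i) = ∑ j ∈ J, a (n j) ∧
    ∑ i ∈ Iᶜ, a (m i) = s' + ∑ j ∈ Jᶜ, a (n j)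

/-
Put `s' = Σ_{i∈I*} a_{m_i} − Σ_{j∈J*} a_{n_j}`. Since the `λ`-sums over `I*` and `J*` agree,
`s'` is a signed sum of at most `k + l` approximation errors `a_n − λ_{f(n)}`, so
`|s'| ≤ (k+l)Θ`, and being an integer, `|s'| ≤ ⌈(k+l)Θ⌉`. Subtracting
`Σ_{I*} a_{m_i} = s' + Σ_{J*} a_{n_j}` from the relation `r + Σ a_{m_i} = Σ a_{n_j}` splits it
along the complements `I = I*ᶜ`, `J = J*ᶜ`, which are proper because `I*`, `J*` are nonempty.
-/

open Finset

section OrderedRing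

variable {R : Type*} [CommRing R] [LinearOrder R] [IsOrderedRing R]

theorem abs_sum_sub_sum_le_card_mul {ι : Type*} (I : Finset ι) (x y : ι → R) {Θ : R}
    (h : ∀ i ∈ I, |x i - y i| ≤ Θ) :
    |∑ i ∈ I, x i - ∑ i ∈ I, y i| ≤ #I * Θ := by
  rw [← sum_sub_distrib]
  calc |∑ i ∈ I, (x i - y i)| ≤ ∑ i ∈ I, |x i - y i| := abs_sum_le_sum_abs _ _
    _ ≤ #I • Θ := sum_le_card_nsmul _ _ _ h
    _ = #I * Θ := nsmul_eq_mul _ _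

theorem abs_sum_sub_sum_le_of_sum_eq {ι κ : Type*} (I : Finset ι) (J : Finset κ)
    (x μ : ι → R) (y ν : κ → R) {Θ : R}
    (hx : ∀ i ∈ I, |x i - μ i| ≤ Θ) (hy : ∀ j ∈ J, |y j - ν j| ≤ Θ)
    (hμν : ∑ i ∈ I, μ i = ∑ j ∈ J, ν j) :
    |∑ i ∈ I, x i - ∑ j ∈ J, y j| ≤ (#I + #J) * Θ := by
  have hsplit : ∑ i ∈ I, x i - ∑ j ∈ J, y j
      = (∑ i ∈ I, x i - ∑ i ∈ I, μ i) - (∑ j ∈ J, y j - ∑ j ∈ J, ν j) := by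
    rw [hμν]; ring
  rw [hsplit, add_mul]
  exact (abs_sub _ _).trans
    (add_le_add (abs_sum_sub_sum_le_card_mul I x μ hx) (abs_sum_sub_sum_le_card_mul J y ν hy))

end OrderedRing

theorem inRelS_of_inRel_of_abs_sub_le {a : ℕ → ℤ} {k l : ℕ} {r s : ℤ}
    {m : Fin k → ℕ} {n : Fin l → ℕ} (hmn : inRel a r m n)
    {I : Finset (Fin k)} {J : Finset (Fin l)} (hI : I.Nonempty) (hJ : J.Nonempty)
    (hproper : I ≠ univ ∨ J ≠ univ)
    (hle : |∑ i ∈ I, a (m i) - ∑ j ∈ J, a (n j)| ≤ s) :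
    inRelS a r s m n := by
  have hm := sum_add_sum_compl I fun i => a (m i)
  have hn := sum_add_sum_compl J fun j => a (n j)
  unfold inRel at hmn
  refine ⟨_, hle, Iᶜ, Jᶜ, (compl_ne_univ_iff_nonempty I).2 hI,
    (compl_ne_univ_iff_nonempty J).2 hJ, ?_, ?_, ?_⟩
  · refine hproper.imp (fun h => ?_) (fun h => ?_) <;>
      exact nonempty_iff_ne_empty.2 ((compl_eq_empty_iff _).not.2 h)
  · linarith
  · rw [compl_compl, compl_compl]; ring

theorem inRelS_of_lambda_sum_eq_general (a : ℕ → ℤ) (lam : ℕ → ℝ) (f : ℕ → ℕ) (Θ : ℝ)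
    (happ : ∀ n : ℕ, |(a n : ℝ) - lam (f n)| ≤ Θ)
    (k l : ℕ) (r s : ℤ)
    (hs : s = max |r| ⌈((k + l : ℕ) : ℝ) * Θ⌉)
    (m : Fin k → ℕ) (n : Fin l → ℕ) (hmn : inRel a r m n)
    (Istar : Finset (Fin k)) (Jstar : Finset (Fin l))
    (hI : Istar.Nonempty) (hJ : Jstar.Nonempty)
    (hproper : Istar ≠ Finset.univ ∨ Jstar ≠ Finset.univ)
    (heq : ∑ i ∈ Istar, lam (f (m i)) = ∑ j ∈ Jstar, lam (f (n j))) :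
    inRelS a r s m n := by
  have hΘ : 0 ≤ Θ := (abs_nonneg _).trans (happ 0)
  have hcard : (#Istar + #Jstar : ℝ) ≤ k + l := by
    gcongr <;> exact (card_le_univ _).trans_eq (Fintype.card_fin _)
  have hdefect : |((∑ i ∈ Istar, a (m i) - ∑ j ∈ Jstar, a (n j) : ℤ) : ℝ)|
      ≤ ((k + l : ℕ) : ℝ) * Θ := by
    push_cast
    exact (abs_sum_sub_sum_le_of_sum_eq Istar Jstar _ _ _ _ (fun i _ => happ (m i))
      (fun j _ => happ (n j)) heq).trans (mul_le_mul_of_nonneg_right hcard hΘ)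
  refine inRelS_of_inRel_of_abs_sub_le hmn hI hJ hproper ?_
  exact hs ▸ le_max_of_le_right (by exact_mod_cast hdefect.trans (Int.le_ceil _))

/-- Suppose `|a_n − λ_{f(n)}| ≤ Θ` for all `n`, `k, l ≥ 1`, `r ∈ ℤ`, and
`s = max{|r|, ⌈(k+l)Θ⌉}`. If `(m̄,n̄) ∈ A(k,l,r)` and there are nonempty `I* ⊆ [k]`,
`J* ⊆ [l]`, at least one proper, with `Σ_{i∈I*} λ_{f(m_i)} = Σ_{j∈J*} λ_{f(n_j)}`,
then `(m̄,n̄) ∈ A(k,l,r,s)`. -/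
theorem inRelS_of_lambda_sum_eq (A : Set ℤ) (hApos : ∀ x ∈ A, 0 < x)
    (a : ℕ → ℤ) (ha : StrictMono a) (hrange : Set.range a = A)
    (lam : ℕ → ℝ) (hlam : ∀ m, 0 < lam m) (f : ℕ → ℕ) (Θ : ℝ) (hΘ : 0 ≤ Θ)
    (happ : ∀ n : ℕ, |(a n : ℝ) - lam (f n)| ≤ Θ)
    (k l : ℕ) (hk : 1 ≤ k) (hl : 1 ≤ l) (r s : ℤ)
    (hs : s = max |r| ⌈((k + l : ℕ) : ℝ) * Θ⌉)
    (m : Fin k → ℕ) (n : Fin l → ℕ) (hmn : inRel a r m n)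
    (Istar : Finset (Fin k)) (Jstar : Finset (Fin l))
    (hI : Istar.Nonempty) (hJ : Jstar.Nonempty)
    (hproper : Istar ≠ Finset.univ ∨ Jstar ≠ Finset.univ)
    (heq : ∑ i ∈ Istar, lam (f (m i)) = ∑ j ∈ Jstar, lam (f (n j))) :
    inRelS a r s m n :=
  inRelS_of_lambda_sum_eq_general a lam f Θ happ k l r s hs m n hmn Istar Jstar hI hJ hproper heq
end
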